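/- arXiv:2507.00872 — 9 statements merged into one kernel-verified Lean document; each statement's English description precedes it below -/
import Mathlib

section
/- Let A be an m×n boolean (0/1) matrix with a factorization A = UV where every row u_i of U has ℓ²-norm at most 1 and every column v_j of V has ℓ²-norm at most λ. Then for every row index i, |R_i|² ≤ Σ_{r,s ∈ R_i} |⟨v_r, v_s⟩|² ≤ λ⁴|R_i|², where R_i = { j : A(i,j) = 1 }. -/
open scoped BigOperators Matrix Classical

/-- For a boolean matrix `A` with a `λ`-factorization `A = U V`, for each row `i`,
`|R_i|² ≤ Σ_{r,s ∈ R_i} |⟨v_r, v_s⟩|² ≤ λ⁴ |R_i|²`. -/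
theorem row_support_inner_bounds (m n t : ℕ) (lam : ℝ)
    (A : Matrix (Fin m) (Fin n) ℝ)
    (U : Matrix (Fin m) (Fin t) ℝ) (V : Matrix (Fin t) (Fin n) ℝ)
    (hbool : ∀ i j, A i j = 0 ∨ A i j = 1)
    (hfac : A = U * V)
    (hU : ∀ i, ∑ k, (U i k) ^ 2 ≤ 1)
    (hV : ∀ j, ∑ k, (V k j) ^ 2 ≤ lam ^ 2)
    (i : Fin m)
    (R : Finset (Fin n)) (hR : R = Finset.univ.filter (fun j => A i j = 1)) :
    ((R.card : ℝ)) ^ 2 ≤ ∑ r ∈ R, ∑ s ∈ R, (∑ k, V k r * V k s) ^ 2 ∧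
      ∑ r ∈ R, ∑ s ∈ R, (∑ k, V k r * V k s) ^ 2 ≤ lam ^ 4 * (R.card : ℝ) ^ 2 := by
  have hmem : ∀ j ∈ R, A i j = 1 := by
    intro j hj
    rw [hR] at hj
    exact (Finset.mem_filter.mp hj).2
  set T := ∑ r ∈ R, ∑ s ∈ R, (∑ k, V k r * V k s) ^ 2 with hTdef
  have hTnonneg : 0 ≤ T :=
    Finset.sum_nonneg fun r _ => Finset.sum_nonneg fun s _ => sq_nonneg _
  have hlam2 : (0:ℝ) ≤ lam ^ 2 := sq_nonneg lam
  -- card as inner product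
  have hcard : (R.card : ℝ) = ∑ k, U i k * ∑ j ∈ R, V k j := by
    have h1 : (R.card : ℝ) = ∑ j ∈ R, A i j := by
      rw [Finset.sum_congr rfl hmem]; simp
    rw [h1, hfac]
    simp only [Matrix.mul_apply]
    rw [Finset.sum_comm]
    simp [Finset.mul_sum]
  have hS : ∑ k, (∑ j ∈ R, V k j) ^ 2 = ∑ r ∈ R, ∑ s ∈ R, (∑ k, V k r * V k s) := by
    simp only [sq, Finset.sum_mul_sum]
    rw [Finset.sum_comm]
    exact Finset.sum_congr rfl fun r _ => Finset.sum_comm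
  have h1 : (R.card : ℝ) ^ 2 ≤ ∑ r ∈ R, ∑ s ∈ R, (∑ k, V k r * V k s) := by
    calc (R.card : ℝ) ^ 2 = (∑ k, U i k * ∑ j ∈ R, V k j) ^ 2 := by rw [hcard]
      _ ≤ (∑ k, (U i k) ^ 2) * ∑ k, (∑ j ∈ R, V k j) ^ 2 :=
        Finset.sum_mul_sq_le_sq_mul_sq _ _ _
      _ ≤ 1 * ∑ k, (∑ j ∈ R, V k j) ^ 2 :=
        mul_le_mul_of_nonneg_right (hU i) (Finset.sum_nonneg fun k _ => sq_nonneg _)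
      _ = ∑ k, (∑ j ∈ R, V k j) ^ 2 := one_mul _
      _ = _ := hS
  -- lower bound
  have hlower : (R.card : ℝ) ^ 2 ≤ T := by
    rcases Nat.eq_zero_or_pos R.card with h0 | hpos
    · simpa [h0] using hTnonneg
    · have hSprod : ∑ r ∈ R, ∑ s ∈ R, (∑ k, V k r * V k s)
          = ∑ p ∈ R ×ˢ R, (∑ k, V k p.1 * V k p.2) := by rw [Finset.sum_product]
      have hTprod : T = ∑ p ∈ R ×ˢ R, (∑ k, V k p.1 * V k p.2) ^ 2 := by
        rw [hTdef]; exact (Finset.sum_product' R R (fun r s => (∑ k, V k r * V k s) ^ 2)).symm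
      have hcs : (∑ p ∈ R ×ˢ R, (1:ℝ) * (∑ k, V k p.1 * V k p.2)) ^ 2
          ≤ (∑ _p ∈ R ×ˢ R, (1:ℝ) ^ 2) * ∑ p ∈ R ×ˢ R, (∑ k, V k p.1 * V k p.2) ^ 2 :=
        Finset.sum_mul_sq_le_sq_mul_sq _ _ _
      simp only [one_mul, one_pow, Finset.sum_const, Finset.card_product, nsmul_eq_mul, mul_one,
        Nat.cast_mul] at hcs
      have hS2 : ((R.card : ℝ) ^ 2) ^ 2 ≤ (∑ p ∈ R ×ˢ R, (∑ k, V k p.1 * V k p.2)) ^ 2 := by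
        apply pow_le_pow_left₀ (sq_nonneg _)
        rw [← hSprod]; exact h1
      have key : ((R.card : ℝ) ^ 2) ^ 2 ≤ (R.card : ℝ) ^ 2 * T := by
        calc ((R.card : ℝ) ^ 2) ^ 2 ≤ (∑ p ∈ R ×ˢ R, (∑ k, V k p.1 * V k p.2)) ^ 2 := hS2
          _ ≤ (R.card : ℝ) * (R.card : ℝ) * ∑ p ∈ R ×ˢ R, (∑ k, V k p.1 * V k p.2) ^ 2 := hcs
          _ = (R.card : ℝ) ^ 2 * T := by rw [hTprod]; ring
      have hcardpos : (0:ℝ) < (R.card : ℝ) ^ 2 := by positivity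
      have := (mul_le_mul_iff_right₀ hcardpos).mp (by
        calc (R.card : ℝ) ^ 2 * (R.card : ℝ) ^ 2 = ((R.card : ℝ) ^ 2) ^ 2 := by ring
          _ ≤ (R.card : ℝ) ^ 2 * T := key)
      exact this
  refine ⟨hlower, ?_⟩
  -- upper bound
  have hpair : ∀ r ∈ R, ∀ s ∈ R, (∑ k, V k r * V k s) ^ 2 ≤ lam ^ 4 := by
    intro r _ s _
    calc (∑ k, V k r * V k s) ^ 2 ≤ (∑ k, (V k r) ^ 2) * ∑ k, (V k s) ^ 2 :=
        Finset.sum_mul_sq_le_sq_mul_sq _ _ _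
      _ ≤ lam ^ 2 * lam ^ 2 :=
        mul_le_mul (hV r) (hV s) (Finset.sum_nonneg fun k _ => sq_nonneg _) hlam2
      _ = lam ^ 4 := by ring
  calc T ≤ ∑ r ∈ R, ∑ s ∈ R, lam ^ 4 := by
        apply Finset.sum_le_sum; intro r hr
        exact Finset.sum_le_sum fun s hs => hpair r hr s hs
    _ = lam ^ 4 * (R.card : ℝ) ^ 2 := by
        simp [Finset.sum_const, nsmul_eq_mul]; ring
end

section
/- Every boolean matrix A satisfying γ₂(A) ≤ 1 is blocky. -/
open scoped BigOperators Matrix Classical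

/-- Every boolean matrix with `γ₂` norm at most 1 is blocky. -/
theorem gamma2_le_one_blocky (m n : ℕ)
    (A : Matrix (Fin m) (Fin n) ℝ)
    (hbool : ∀ i j, A i j = 0 ∨ A i j = 1)
    (hgamma : ∃ (t : ℕ) (U : Matrix (Fin m) (Fin t) ℝ) (V : Matrix (Fin t) (Fin n) ℝ),
      A = U * V ∧ (∀ i, ∑ k, (U i k) ^ 2 ≤ 1) ∧ (∀ j, ∑ k, (V k j) ^ 2 ≤ 1)) :
    ∃ (k : ℕ) (S : Fin k → Finset (Fin m)) (T : Fin k → Finset (Fin n)),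
      (∀ a b, a ≠ b → Disjoint (S a) (S b)) ∧
      (∀ a b, a ≠ b → Disjoint (T a) (T b)) ∧
      (∀ i j, A i j = 1 ↔ ∃ t, i ∈ S t ∧ j ∈ T t) := by
  obtain ⟨t, U, V, hA, hU, hV⟩ := hgamma
  have hAeq : ∀ i j, A i j = ∑ k, U i k * V k j := by
    intro i j; rw [hA, Matrix.mul_apply]
  -- key: if A i j = 1 then row i of U equals column j of V
  have key : ∀ i j, A i j = 1 → ∀ k, U i k = V k j := by
    intro i j hij
    have hsum : ∑ k, (U i k - V k j) ^ 2
        = (∑ k, (U i k) ^ 2) + (∑ k, (V k j) ^ 2) - 2 * ∑ k, U i k * V k j := by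
      rw [Finset.mul_sum, ← Finset.sum_add_distrib, ← Finset.sum_sub_distrib]
      apply Finset.sum_congr rfl
      intro k _; ring
    have h0 : ∑ k, (U i k - V k j) ^ 2 ≤ 0 := by
      rw [hsum, ← hAeq i j, hij]
      have := hU i; have := hV j; linarith
    have hz : ∀ k ∈ Finset.univ, (U i k - V k j) ^ 2 = 0 := by
      rw [← Finset.sum_eq_zero_iff_of_nonneg (fun k _ => sq_nonneg _)]
      exact le_antisymm h0 (Finset.sum_nonneg fun k _ => sq_nonneg _)
    intro k
    have := hz k (Finset.mem_univ k)
    have := sq_eq_zero_iff.mp this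
    linarith
  -- rows with a common 1 are equal
  have rows_eq : ∀ i i' j, A i j = 1 → A i' j = 1 → ∀ j', A i j' = A i' j' := by
    intro i i' j hij hi'j j'
    rw [hAeq, hAeq]
    apply Finset.sum_congr rfl
    intro k _
    rw [key i j hij k, key i' j hi'j k]
  -- construction: block indexed by the minimal row with a given row pattern
  set P : Fin m → Prop := fun r =>
    (∃ j, A r j = 1) ∧ ∀ r', (∀ j, A r' j = A r j) → r ≤ r' with hP
  refine ⟨m,
    fun r => Finset.univ.filter (fun i => P r ∧ ∀ j, A i j = A r j),
    fun r => Finset.univ.filter (fun j => P r ∧ A r j = 1), ?_, ?_, ?_⟩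
  · intro a b hab
    rw [Finset.disjoint_left]
    intro i hia hib
    simp only [Finset.mem_filter] at hia hib
    obtain ⟨-, ⟨-, hamin⟩, ha⟩ := hia
    obtain ⟨-, ⟨-, hbmin⟩, hb⟩ := hib
    exact hab (le_antisymm (hamin b (fun j => (hb j).symm.trans (ha j)))
      (hbmin a (fun j => (ha j).symm.trans (hb j))))
  · intro a b hab
    rw [Finset.disjoint_left]
    intro j hja hjb
    simp only [Finset.mem_filter] at hja hjb
    obtain ⟨-, ⟨-, hamin⟩, ha⟩ := hja
    obtain ⟨-, ⟨-, hbmin⟩, hb⟩ := hjb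
    have hre : ∀ j', A a j' = A b j' := rows_eq a b j ha hb
    exact hab (le_antisymm (hamin b (fun j => (hre j).symm)) (hbmin a hre))
  · intro i j
    constructor
    · intro hij
      set F : Finset (Fin m) := Finset.univ.filter (fun r => ∀ j', A r j' = A i j') with hF
      have hiF : i ∈ F := by simp [hF]
      have hne : F.Nonempty := ⟨i, hiF⟩
      set r := F.min' hne with hr
      have hrF : r ∈ F := F.min'_mem hne
      simp only [hF, Finset.mem_filter] at hrF
      have hrow : ∀ j', A r j' = A i j' := hrF.2
      have hPr : P r := by
        refine ⟨⟨j, (hrow j).trans hij⟩, ?_⟩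
        intro r' hr'
        have : r' ∈ F := by
          simp only [hF, Finset.mem_filter]
          exact ⟨Finset.mem_univ r', fun j' => (hr' j').trans (hrow j')⟩
        exact F.min'_le r' this
      refine ⟨r, ?_, ?_⟩
      · simp only [Finset.mem_filter]
        exact ⟨Finset.mem_univ i, hPr, fun j' => (hrow j').symm⟩
      · simp only [Finset.mem_filter]
        exact ⟨Finset.mem_univ j, hPr, (hrow j).trans hij⟩
    · rintro ⟨r, hi, hj⟩
      simp only [Finset.mem_filter] at hi hj
      exact (hi.2.2 j).trans hj.2.2
end

section
/- Let G be the n×n boolean matrix with G(i,j) = 1 if and only if i ≥ j (the half-graph matrix). Then γ₂(G) ≥ (1/(2π)) ln n − O(1). -/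
open scoped BigOperators Matrix
open Real

noncomputable def kker : ℤ → ℝ := fun m => if m = 0 then 0 else 1/(π*m)
noncomputable def sFn (i : ℕ) : ℝ → ℝ := fun θ => Real.sin (2*π*(i+1)*θ)
noncomputable def cFn (i : ℕ) : ℝ → ℝ := fun θ => Real.cos (2*π*(i+1)*θ)

@[continuity, fun_prop] lemma cont_sFn (i : ℕ) : Continuous (sFn i) := by unfold sFn; continuity
@[continuity, fun_prop] lemma cont_cFn (i : ℕ) : Continuous (cFn i) := by unfold cFn; continuity


lemma sin_int_two_pi (m : ℤ) : Real.sin (2*π*m) = 0 := by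
  have := Real.sin_int_mul_pi (2*m)
  push_cast at this
  rw [show (2:ℝ)*π*m = 2*(m:ℝ)*π by ring]
  exact this

lemma cos_int_two_pi (m : ℤ) : Real.cos (2*π*m) = 1 := by
  have := Real.cos_int_mul_two_pi m
  rw [show (2:ℝ)*π*m = (m:ℝ)*(2*π) by ring]
  exact this

lemma int_sin (m : ℤ) : (∫ θ in (0:ℝ)..1, Real.sin (2*π*m*θ)) = 0 := by
  rcases eq_or_ne m 0 with rfl | hm
  · simp
  · have hc : (2*π*(m:ℝ)) ≠ 0 := by
      have := Real.pi_ne_zero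
      have : (m:ℝ) ≠ 0 := Int.cast_ne_zero.mpr hm
      positivity
    have := intervalIntegral.integral_comp_mul_left Real.sin hc (a := 0) (b := 1)
    rw [this]
    simp [integral_sin, cos_int_two_pi m]

lemma int_cos (m : ℤ) (hm : m ≠ 0) : (∫ θ in (0:ℝ)..1, Real.cos (2*π*m*θ)) = 0 := by
  have hc : (2*π*(m:ℝ)) ≠ 0 := by
    have := Real.pi_ne_zero
    have : (m:ℝ) ≠ 0 := Int.cast_ne_zero.mpr hm
    positivity
  have := intervalIntegral.integral_comp_mul_left Real.cos hc (a := 0) (b := 1)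
  rw [this]
  simp [integral_cos, sin_int_two_pi m]

lemma int_saw_sin (m : ℤ) (hm : m ≠ 0) :
    (∫ θ in (0:ℝ)..1, (1-2*θ) * Real.sin (2*π*m*θ)) = 1/(π*m) := by
  set c : ℝ := 2*π*m with hcdef
  have hc : c ≠ 0 := by
    have := Real.pi_ne_zero
    have : (m:ℝ) ≠ 0 := Int.cast_ne_zero.mpr hm
    rw [hcdef]; positivity
  have hderiv : ∀ x ∈ Set.uIcc (0:ℝ) 1,
      HasDerivAt (fun θ : ℝ => -(1-2*θ) * Real.cos (c*θ) / c - 2 * Real.sin (c*θ) / c^2)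
        ((1-2*x) * Real.sin (c*x)) x := by
    intro x _
    have h1 : HasDerivAt (fun θ : ℝ => c*θ) c x := by
      simpa using (hasDerivAt_id x).const_mul c
    have hcos : HasDerivAt (fun θ : ℝ => Real.cos (c*θ)) (-Real.sin (c*x) * c) x := h1.cos
    have hsin : HasDerivAt (fun θ : ℝ => Real.sin (c*θ)) (Real.cos (c*x) * c) x := h1.sin
    have hlin : HasDerivAt (fun θ : ℝ => -(1-2*θ)) (2:ℝ) x := by
      have : HasDerivAt (fun θ : ℝ => (-1:ℝ) + 2*θ) (2:ℝ) x := by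
        simpa using ((hasDerivAt_id x).const_mul (2:ℝ)).const_add (-1:ℝ)
      convert this using 2 with θ; ring
    have hmul : HasDerivAt (fun θ : ℝ => -(1-2*θ) * Real.cos (c*θ))
        (2 * Real.cos (c*x) + (-(1-2*x)) * (-Real.sin (c*x) * c)) x := hlin.mul hcos
    have := ((hmul.div_const c).sub (((hsin.const_mul (2:ℝ)).div_const (c^2))))
    refine this.congr_deriv ?_
    field_simp
    ring
  have hint : IntervalIntegrable (fun x : ℝ => (1-2*x) * Real.sin (c*x))
      MeasureTheory.volume 0 1 := by
    apply Continuous.intervalIntegrable; continuity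
  have := intervalIntegral.integral_eq_sub_of_hasDerivAt hderiv hint
  rw [hcdef] at this
  rw [this]
  simp only [mul_one, mul_zero]
  rw [cos_int_two_pi m, sin_int_two_pi m]
  simp only [Real.cos_zero, Real.sin_zero]
  have hπ : π ≠ 0 := Real.pi_ne_zero
  have hmr : (m:ℝ) ≠ 0 := Int.cast_ne_zero.mpr hm
  field_simp
  ring



lemma int_cos' (m : ℤ) : (∫ θ in (0:ℝ)..1, Real.cos (2*π*m*θ)) = if m = 0 then 1 else 0 := by
  rcases eq_or_ne m 0 with rfl | hm
  · simp
  · simp [int_cos m hm, hm]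

lemma int_sin_sin (m p : ℤ) (hm : 0 < m) (hp : 0 < p) :
    (∫ θ in (0:ℝ)..1, Real.sin (2*π*m*θ) * Real.sin (2*π*p*θ)) = if m = p then 1/2 else 0 := by
  have key : ∀ θ : ℝ, Real.sin (2*π*m*θ) * Real.sin (2*π*p*θ)
      = (1/2) * Real.cos (2*π*(((m-p : ℤ)):ℝ)*θ) - (1/2) * Real.cos (2*π*(((m+p : ℤ)):ℝ)*θ) := by
    intro θ
    rw [show 2*π*(((m-p : ℤ)):ℝ)*θ = (2*π*m*θ) - (2*π*p*θ) by push_cast; ring,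
        show 2*π*(((m+p : ℤ)):ℝ)*θ = (2*π*m*θ) + (2*π*p*θ) by push_cast; ring,
        Real.cos_sub, Real.cos_add]
    ring
  rw [show (fun θ => Real.sin (2*π*m*θ) * Real.sin (2*π*p*θ))
      = fun θ : ℝ => (1/2) * Real.cos (2*π*(((m-p : ℤ)):ℝ)*θ) - (1/2) * Real.cos (2*π*(((m+p : ℤ)):ℝ)*θ)
      from funext key]
  rw [intervalIntegral.integral_sub
        (by apply Continuous.intervalIntegrable; continuity)
        (by apply Continuous.intervalIntegrable; continuity),
      intervalIntegral.integral_const_mul, intervalIntegral.integral_const_mul,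
      int_cos', int_cos (m+p) (by omega)]
  by_cases h : m = p <;> simp [h, sub_eq_zero]

lemma int_cos_cos (m p : ℤ) (hm : 0 < m) (hp : 0 < p) :
    (∫ θ in (0:ℝ)..1, Real.cos (2*π*m*θ) * Real.cos (2*π*p*θ)) = if m = p then 1/2 else 0 := by
  have key : ∀ θ : ℝ, Real.cos (2*π*m*θ) * Real.cos (2*π*p*θ)
      = (1/2) * Real.cos (2*π*(((m-p : ℤ)):ℝ)*θ) + (1/2) * Real.cos (2*π*(((m+p : ℤ)):ℝ)*θ) := by
    intro θ
    rw [show 2*π*(((m-p : ℤ)):ℝ)*θ = (2*π*m*θ) - (2*π*p*θ) by push_cast; ring,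
        show 2*π*(((m+p : ℤ)):ℝ)*θ = (2*π*m*θ) + (2*π*p*θ) by push_cast; ring,
        Real.cos_sub, Real.cos_add]
    ring
  rw [show (fun θ => Real.cos (2*π*m*θ) * Real.cos (2*π*p*θ))
      = fun θ : ℝ => (1/2) * Real.cos (2*π*(((m-p : ℤ)):ℝ)*θ) + (1/2) * Real.cos (2*π*(((m+p : ℤ)):ℝ)*θ)
      from funext key]
  rw [intervalIntegral.integral_add
        (by apply Continuous.intervalIntegrable; continuity)
        (by apply Continuous.intervalIntegrable; continuity),
      intervalIntegral.integral_const_mul, intervalIntegral.integral_const_mul,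
      int_cos', int_cos (m+p) (by omega)]
  by_cases h : m = p <;> simp [h, sub_eq_zero]

lemma int_sin_cos (m p : ℤ) :
    (∫ θ in (0:ℝ)..1, Real.sin (2*π*m*θ) * Real.cos (2*π*p*θ)) = 0 := by
  have key : ∀ θ : ℝ, Real.sin (2*π*m*θ) * Real.cos (2*π*p*θ)
      = (1/2) * Real.sin (2*π*(((m+p : ℤ)):ℝ)*θ) + (1/2) * Real.sin (2*π*(((m-p : ℤ)):ℝ)*θ) := by
    intro θ
    rw [show 2*π*(((m-p : ℤ)):ℝ)*θ = (2*π*m*θ) - (2*π*p*θ) by push_cast; ring,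
        show 2*π*(((m+p : ℤ)):ℝ)*θ = (2*π*m*θ) + (2*π*p*θ) by push_cast; ring,
        Real.sin_sub, Real.sin_add]
    ring
  rw [show (fun θ => Real.sin (2*π*m*θ) * Real.cos (2*π*p*θ))
      = fun θ : ℝ => (1/2) * Real.sin (2*π*(((m+p : ℤ)):ℝ)*θ) + (1/2) * Real.sin (2*π*(((m-p : ℤ)):ℝ)*θ)
      from funext key]
  rw [intervalIntegral.integral_add
        (by apply Continuous.intervalIntegrable; continuity)
        (by apply Continuous.intervalIntegrable; continuity),
      intervalIntegral.integral_const_mul, intervalIntegral.integral_const_mul,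
      int_sin, int_sin]
  ring


lemma harm_ge_log (n : ℕ) : Real.log ((n:ℝ)+1) ≤ ∑ m ∈ Finset.range n, (1:ℝ)/(m+1) := by
  have h := log_add_one_le_harmonic n
  push_cast at h
  have hc : ((harmonic n : ℚ) : ℝ) = ∑ m ∈ Finset.range n, (1:ℝ)/(m+1) := by
    rw [harmonic]; push_cast; simp [one_div]
  linarith [h, hc.ge]

lemma sum_harm_lower (n : ℕ) :
    (n:ℝ) * Real.log n - n ≤ ∑ i ∈ Finset.range n, ∑ m ∈ Finset.range i, (1:ℝ)/(m+1) := by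
  induction n with
  | zero => simp
  | succ n ih =>
    rw [Finset.sum_range_succ]
    have hH : Real.log ((n:ℝ)+1) ≤ ∑ m ∈ Finset.range n, (1:ℝ)/(m+1) := harm_ge_log n
    have hcast : ((n+1 : ℕ) : ℝ) = (n:ℝ) + 1 := by push_cast; ring
    rw [hcast]
    rcases Nat.eq_zero_or_pos n with rfl | hn
    · norm_num
    · have hnR : (0:ℝ) < n := by exact_mod_cast hn
      have hlog : Real.log ((n:ℝ)+1) - Real.log n ≤ 1/(n:ℝ) := by
        rw [← Real.log_div (by linarith) (ne_of_gt hnR)]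
        have := Real.log_le_sub_one_of_pos (x := ((n:ℝ)+1)/n) (by positivity)
        have heq : ((n:ℝ)+1)/n - 1 = 1/(n:ℝ) := by field_simp; ring
        linarith [this, heq.le]
      have hmul : (n:ℝ) * (Real.log ((n:ℝ)+1) - Real.log n) ≤ 1 := by
        have := mul_le_mul_of_nonneg_left hlog (le_of_lt hnR)
        rw [mul_one_div, div_self (ne_of_gt hnR)] at this
        exact this
      nlinarith [ih, hH]

lemma int_saw_sin' (m : ℤ) :
    (∫ θ in (0:ℝ)..1, (1-2*θ) * Real.sin (2*π*m*θ)) = kker m := by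
  rcases eq_or_ne m 0 with rfl | hm
  · simp [kker]
  · rw [int_saw_sin m hm]; simp [kker, hm]

lemma freq_cast (i : ℕ) : ∀ θ : ℝ, 2*π*((i:ℕ)+1 : ℝ)*θ = 2*π*(((i+1 : ℤ)):ℝ)*θ := by
  intro θ; push_cast; ring

lemma int_ss (i j : ℕ) : (∫ θ in (0:ℝ)..1, sFn i θ * sFn j θ) = if i = j then 1/2 else 0 := by
  unfold sFn
  simp_rw [freq_cast]
  rw [int_sin_sin (i+1) (j+1) (by omega) (by omega)]
  simp [show ((i:ℤ)+1 = (j:ℤ)+1) ↔ i = j by omega]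

lemma int_cc (i j : ℕ) : (∫ θ in (0:ℝ)..1, cFn i θ * cFn j θ) = if i = j then 1/2 else 0 := by
  unfold cFn
  simp_rw [freq_cast]
  rw [int_cos_cos (i+1) (j+1) (by omega) (by omega)]
  simp [show ((i:ℤ)+1 = (j:ℤ)+1) ↔ i = j by omega]

lemma int_sc (i j : ℕ) : (∫ θ in (0:ℝ)..1, sFn i θ * cFn j θ) = 0 := by
  unfold sFn cFn
  simp_rw [freq_cast]
  rw [int_sin_cos (i+1) (j+1)]

lemma saw_eq (i j : ℕ) :
    (∫ θ in (0:ℝ)..1, (1-2*θ) * (sFn i θ * cFn j θ - cFn i θ * sFn j θ))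
      = kker ((i:ℤ) - (j:ℤ)) := by
  have key : ∀ θ : ℝ, sFn i θ * cFn j θ - cFn i θ * sFn j θ
      = Real.sin (2*π*((((i:ℤ)-(j:ℤ)) : ℤ):ℝ)*θ) := by
    intro θ
    rw [show 2*π*((((i:ℤ)-(j:ℤ)) : ℤ):ℝ)*θ = (2*π*((i:ℕ)+1:ℝ)*θ) - (2*π*((j:ℕ)+1:ℝ)*θ) by
      push_cast; ring, Real.sin_sub]
    rfl
  simp_rw [key]
  exact int_saw_sin' _

lemma amgm_half (a b x y : ℝ) (ha : 0 < a) (hb : 0 < b) :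
    |x| * |y| ≤ (b/(2*a)) * x^2 + (a/(2*b)) * y^2 := by
  have h2 : 2*(a*b)*(|x| * |y|) ≤ b^2*x^2 + a^2*y^2 := by
    nlinarith [sq_nonneg (b*|x| - a*|y|), sq_abs x, sq_abs y]
  have heq : (b/(2*a)) * x^2 + (a/(2*b)) * y^2 - |x| * |y|
      = (b^2*x^2 + a^2*y^2 - 2*(a*b)*(|x| * |y|))/(2*(a*b)) := by
    field_simp
  nlinarith [div_nonneg (by linarith : (0:ℝ) ≤ b^2*x^2 + a^2*y^2 - 2*(a*b)*(|x| * |y|))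
    (by positivity : (0:ℝ) ≤ 2*(a*b)), heq]

lemma triple_swap {n t : ℕ} (f : Fin n → Fin n → Fin t → ℝ) :
    ∑ i, ∑ j, ∑ k, f i j k = ∑ k, ∑ i, ∑ j, f i j k := by
  have h1 : ∀ i : Fin n, ∑ j, ∑ k, f i j k = ∑ k, ∑ j, f i j k := fun i => Finset.sum_comm
  simp_rw [h1]
  exact Finset.sum_comm

lemma key_upper (n t : ℕ) (U : Matrix (Fin n) (Fin t) ℝ) (V : Matrix (Fin t) (Fin n) ℝ)
    (a b : ℝ) (ha : 0 < a) (hb : 0 < b)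
    (hU : ∀ i, ∑ k, (U i k)^2 ≤ a^2) (hV : ∀ j, ∑ k, (V k j)^2 ≤ b^2) :
    ∑ i : Fin n, ∑ j : Fin n, ((U * V) i j) * kker ((i:ℕ) - (j:ℕ) : ℤ) ≤ (n:ℝ) * (a*b) := by
  classical
  -- the four families of functions
  set p : Fin t → ℝ → ℝ := fun kk θ => ∑ i : Fin n, U i kk * sFn (i:ℕ) θ with hp
  set q : Fin t → ℝ → ℝ := fun kk θ => ∑ i : Fin n, U i kk * cFn (i:ℕ) θ with hq
  set r : Fin t → ℝ → ℝ := fun kk θ => ∑ j : Fin n, V kk j * cFn (j:ℕ) θ with hr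
  set w : Fin t → ℝ → ℝ := fun kk θ => ∑ j : Fin n, V kk j * sFn (j:ℕ) θ with hw
  set F : ℝ → ℝ := fun θ => ∑ kk : Fin t, (p kk θ * r kk θ - q kk θ * w kk θ) with hF
  set A : ℝ → ℝ := fun θ => ∑ kk : Fin t, ((p kk θ)^2 + (q kk θ)^2) with hA
  set B : ℝ → ℝ := fun θ => ∑ kk : Fin t, ((r kk θ)^2 + (w kk θ)^2) with hB
  -- continuity facts
  have hcp : ∀ kk, Continuous (p kk) := fun kk =>
    continuous_finset_sum _ fun i _ => continuous_const.mul (cont_sFn i)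
  have hcq : ∀ kk, Continuous (q kk) := fun kk =>
    continuous_finset_sum _ fun i _ => continuous_const.mul (cont_cFn i)
  have hcr : ∀ kk, Continuous (r kk) := fun kk =>
    continuous_finset_sum _ fun j _ => continuous_const.mul (cont_cFn j)
  have hcw : ∀ kk, Continuous (w kk) := fun kk =>
    continuous_finset_sum _ fun j _ => continuous_const.mul (cont_sFn j)
  have hcF : Continuous F := continuous_finset_sum _ fun kk _ =>
    ((hcp kk).mul (hcr kk)).sub ((hcq kk).mul (hcw kk))
  have hcA : Continuous A := continuous_finset_sum _ fun kk _ =>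
    ((hcp kk).pow 2).add ((hcq kk).pow 2)
  have hcB : Continuous B := continuous_finset_sum _ fun kk _ =>
    ((hcr kk).pow 2).add ((hcw kk).pow 2)
  have hcsaw : Continuous (fun θ : ℝ => 1 - 2*θ) :=
    continuous_const.sub (continuous_const.mul continuous_id)
  have hcE : ∀ i j : ℕ, Continuous
      (fun θ => (1-2*θ) * (sFn i θ * cFn j θ - cFn i θ * sFn j θ)) := fun i j =>
    hcsaw.mul (((cont_sFn i).mul (cont_cFn j)).sub ((cont_cFn i).mul (cont_sFn j)))
  have hcg : Continuous (fun θ : ℝ => (1-2*θ) * F θ) := hcsaw.mul hcF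
  -- Step 1: the sum equals the integral of (1-2θ) F θ
  have hpoint : ∀ θ : ℝ, (1-2*θ) * F θ
      = ∑ i : Fin n, ∑ j : Fin n, ((U * V) i j) *
          ((1-2*θ) * (sFn (i:ℕ) θ * cFn (j:ℕ) θ - cFn (i:ℕ) θ * sFn (j:ℕ) θ)) := by
    intro θ
    have hswap : ∑ i : Fin n, ∑ j : Fin n, ((U * V) i j) *
          ((1-2*θ) * (sFn (i:ℕ) θ * cFn (j:ℕ) θ - cFn (i:ℕ) θ * sFn (j:ℕ) θ))
        = ∑ kk : Fin t, ∑ i : Fin n, ∑ j : Fin n, (U i kk * V kk j) *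
          ((1-2*θ) * (sFn (i:ℕ) θ * cFn (j:ℕ) θ - cFn (i:ℕ) θ * sFn (j:ℕ) θ)) := by
      rw [← triple_swap]
      apply Finset.sum_congr rfl; intro i _
      apply Finset.sum_congr rfl; intro j _
      rw [Matrix.mul_apply, Finset.sum_mul]
    rw [hswap, hF, Finset.mul_sum]
    apply Finset.sum_congr rfl; intro kk _
    rw [hp, hq, hr, hw]
    simp only
    rw [Finset.sum_mul_sum, Finset.sum_mul_sum, ← Finset.sum_sub_distrib,
        Finset.mul_sum]
    apply Finset.sum_congr rfl; intro i _
    rw [← Finset.sum_sub_distrib, Finset.mul_sum]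
    apply Finset.sum_congr rfl; intro j _
    ring
  have hD : (∫ θ in (0:ℝ)..1, (1-2*θ) * F θ)
      = ∑ i : Fin n, ∑ j : Fin n, ((U * V) i j) * kker ((i:ℕ) - (j:ℕ) : ℤ) := by
    rw [show (fun θ : ℝ => (1-2*θ) * F θ) = fun θ => ∑ i : Fin n, ∑ j : Fin n, ((U * V) i j) *
          ((1-2*θ) * (sFn (i:ℕ) θ * cFn (j:ℕ) θ - cFn (i:ℕ) θ * sFn (j:ℕ) θ))
        from funext hpoint]
    rw [intervalIntegral.integral_finset_sum (fun i _ => by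
      apply Continuous.intervalIntegrable
      exact continuous_finset_sum _ fun j _ => continuous_const.mul (hcE _ _))]
    apply Finset.sum_congr rfl; intro i _
    rw [intervalIntegral.integral_finset_sum (fun j _ => by
      apply Continuous.intervalIntegrable
      exact continuous_const.mul (hcE _ _))]
    apply Finset.sum_congr rfl; intro j _
    rw [intervalIntegral.integral_const_mul, saw_eq]
  -- Step 2: pointwise bound
  have hbound : ∀ θ ∈ Set.Icc (0:ℝ) 1,
      (1-2*θ) * F θ ≤ (b/(2*a)) * A θ + (a/(2*b)) * B θ := by
    intro θ hθ
    have h1 : (1-2*θ) * F θ ≤ |F θ| := by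
      have habs : |1-2*θ| ≤ 1 := by
        rw [abs_le]; constructor <;> [linarith [hθ.2]; linarith [hθ.1]]
      calc (1-2*θ) * F θ ≤ |(1-2*θ) * F θ| := le_abs_self _
        _ = |1-2*θ| * |F θ| := abs_mul _ _
        _ ≤ 1 * |F θ| := by apply mul_le_mul_of_nonneg_right habs (abs_nonneg _)
        _ = |F θ| := one_mul _
    have h2 : |F θ| ≤ ∑ kk : Fin t, (|p kk θ| * |r kk θ| + |q kk θ| * |w kk θ|) := by
      refine le_trans (Finset.abs_sum_le_sum_abs _ _) (Finset.sum_le_sum fun kk _ => ?_)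
      calc |p kk θ * r kk θ - q kk θ * w kk θ|
          ≤ |p kk θ * r kk θ| + |q kk θ * w kk θ| := abs_sub _ _
        _ = |p kk θ| * |r kk θ| + |q kk θ| * |w kk θ| := by rw [abs_mul, abs_mul]
    have h3 : ∑ kk : Fin t, (|p kk θ| * |r kk θ| + |q kk θ| * |w kk θ|)
        ≤ (b/(2*a)) * A θ + (a/(2*b)) * B θ := by
      have hrhs : (b/(2*a)) * A θ + (a/(2*b)) * B θ
          = ∑ kk : Fin t, ((b/(2*a)) * ((p kk θ)^2 + (q kk θ)^2)
              + (a/(2*b)) * ((r kk θ)^2 + (w kk θ)^2)) := by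
        rw [hA, hB]
        simp only
        rw [Finset.mul_sum, Finset.mul_sum, ← Finset.sum_add_distrib]
      rw [hrhs]
      refine Finset.sum_le_sum fun kk _ => ?_
      have g1 := amgm_half a b (p kk θ) (r kk θ) ha hb
      have g2 := amgm_half a b (q kk θ) (w kk θ) ha hb
      nlinarith [g1, g2]
    linarith
  -- Step 3: integrals of A and B
  have hintP : ∀ kk : Fin t, (∫ θ in (0:ℝ)..1, (p kk θ)^2) = ∑ i : Fin n, (U i kk)^2 * (1/2) := by
    intro kk
    have hexp : (fun θ : ℝ => (p kk θ)^2)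
        = fun θ => ∑ i : Fin n, ∑ i' : Fin n, (U i kk * U i' kk) * (sFn (i:ℕ) θ * sFn (i':ℕ) θ) := by
      funext θ
      rw [hp]; simp only
      rw [sq, Finset.sum_mul_sum]
      apply Finset.sum_congr rfl; intro i _
      apply Finset.sum_congr rfl; intro i' _
      ring
    rw [hexp]
    rw [intervalIntegral.integral_finset_sum (fun i _ => by
      apply Continuous.intervalIntegrable
      exact continuous_finset_sum _ fun i' _ => continuous_const.mul ((cont_sFn _).mul (cont_sFn _)))]
    apply Finset.sum_congr rfl; intro i _
    rw [intervalIntegral.integral_finset_sum (fun i' _ => by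
      apply Continuous.intervalIntegrable
      exact continuous_const.mul ((cont_sFn _).mul (cont_sFn _)))]
    have : ∀ i' : Fin n, (∫ θ in (0:ℝ)..1, (U i kk * U i' kk) * (sFn (i:ℕ) θ * sFn (i':ℕ) θ))
        = (U i kk * U i' kk) * (if i = i' then 1/2 else 0) := by
      intro i'
      rw [intervalIntegral.integral_const_mul, int_ss]
      congr 1
      simp [Fin.val_inj]
    simp_rw [this]
    simp [Finset.sum_ite_eq, mul_ite, mul_zero]
    rw [sq]
  have hintQ : ∀ kk : Fin t, (∫ θ in (0:ℝ)..1, (q kk θ)^2) = ∑ i : Fin n, (U i kk)^2 * (1/2) := by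
    intro kk
    have hexp : (fun θ : ℝ => (q kk θ)^2)
        = fun θ => ∑ i : Fin n, ∑ i' : Fin n, (U i kk * U i' kk) * (cFn (i:ℕ) θ * cFn (i':ℕ) θ) := by
      funext θ
      rw [hq]; simp only
      rw [sq, Finset.sum_mul_sum]
      apply Finset.sum_congr rfl; intro i _
      apply Finset.sum_congr rfl; intro i' _
      ring
    rw [hexp]
    rw [intervalIntegral.integral_finset_sum (fun i _ => by
      apply Continuous.intervalIntegrable
      exact continuous_finset_sum _ fun i' _ => continuous_const.mul ((cont_cFn _).mul (cont_cFn _)))]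
    apply Finset.sum_congr rfl; intro i _
    rw [intervalIntegral.integral_finset_sum (fun i' _ => by
      apply Continuous.intervalIntegrable
      exact continuous_const.mul ((cont_cFn _).mul (cont_cFn _)))]
    have : ∀ i' : Fin n, (∫ θ in (0:ℝ)..1, (U i kk * U i' kk) * (cFn (i:ℕ) θ * cFn (i':ℕ) θ))
        = (U i kk * U i' kk) * (if i = i' then 1/2 else 0) := by
      intro i'
      rw [intervalIntegral.integral_const_mul, int_cc]
      congr 1
      simp [Fin.val_inj]
    simp_rw [this]
    simp [Finset.sum_ite_eq, mul_ite, mul_zero]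
    rw [sq]
  have hintR : ∀ kk : Fin t, (∫ θ in (0:ℝ)..1, (r kk θ)^2) = ∑ j : Fin n, (V kk j)^2 * (1/2) := by
    intro kk
    have hexp : (fun θ : ℝ => (r kk θ)^2)
        = fun θ => ∑ j : Fin n, ∑ j' : Fin n, (V kk j * V kk j') * (cFn (j:ℕ) θ * cFn (j':ℕ) θ) := by
      funext θ
      rw [hr]; simp only
      rw [sq, Finset.sum_mul_sum]
      apply Finset.sum_congr rfl; intro j _
      apply Finset.sum_congr rfl; intro j' _
      ring
    rw [hexp]
    rw [intervalIntegral.integral_finset_sum (fun j _ => by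
      apply Continuous.intervalIntegrable
      exact continuous_finset_sum _ fun j' _ => continuous_const.mul ((cont_cFn _).mul (cont_cFn _)))]
    apply Finset.sum_congr rfl; intro j _
    rw [intervalIntegral.integral_finset_sum (fun j' _ => by
      apply Continuous.intervalIntegrable
      exact continuous_const.mul ((cont_cFn _).mul (cont_cFn _)))]
    have : ∀ j' : Fin n, (∫ θ in (0:ℝ)..1, (V kk j * V kk j') * (cFn (j:ℕ) θ * cFn (j':ℕ) θ))
        = (V kk j * V kk j') * (if j = j' then 1/2 else 0) := by
      intro j'
      rw [intervalIntegral.integral_const_mul, int_cc]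
      congr 1
      simp [Fin.val_inj]
    simp_rw [this]
    simp [Finset.sum_ite_eq, mul_ite, mul_zero]
    rw [sq]
  have hintW : ∀ kk : Fin t, (∫ θ in (0:ℝ)..1, (w kk θ)^2) = ∑ j : Fin n, (V kk j)^2 * (1/2) := by
    intro kk
    have hexp : (fun θ : ℝ => (w kk θ)^2)
        = fun θ => ∑ j : Fin n, ∑ j' : Fin n, (V kk j * V kk j') * (sFn (j:ℕ) θ * sFn (j':ℕ) θ) := by
      funext θ
      rw [hw]; simp only
      rw [sq, Finset.sum_mul_sum]
      apply Finset.sum_congr rfl; intro j _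
      apply Finset.sum_congr rfl; intro j' _
      ring
    rw [hexp]
    rw [intervalIntegral.integral_finset_sum (fun j _ => by
      apply Continuous.intervalIntegrable
      exact continuous_finset_sum _ fun j' _ => continuous_const.mul ((cont_sFn _).mul (cont_sFn _)))]
    apply Finset.sum_congr rfl; intro j _
    rw [intervalIntegral.integral_finset_sum (fun j' _ => by
      apply Continuous.intervalIntegrable
      exact continuous_const.mul ((cont_sFn _).mul (cont_sFn _)))]
    have : ∀ j' : Fin n, (∫ θ in (0:ℝ)..1, (V kk j * V kk j') * (sFn (j:ℕ) θ * sFn (j':ℕ) θ))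
        = (V kk j * V kk j') * (if j = j' then 1/2 else 0) := by
      intro j'
      rw [intervalIntegral.integral_const_mul, int_ss]
      congr 1
      simp [Fin.val_inj]
    simp_rw [this]
    simp [Finset.sum_ite_eq, mul_ite, mul_zero]
    rw [sq]
  have hintA : (∫ θ in (0:ℝ)..1, A θ) = ∑ kk : Fin t, ∑ i : Fin n, (U i kk)^2 := by
    rw [show (fun θ : ℝ => A θ) = fun θ => ∑ kk : Fin t, ((p kk θ)^2 + (q kk θ)^2) from rfl]
    rw [intervalIntegral.integral_finset_sum (fun kk _ =>
      (show IntervalIntegrable (fun θ => (p kk θ)^2 + (q kk θ)^2) MeasureTheory.volume 0 1 from (((hcp kk).pow 2).add ((hcq kk).pow 2)).intervalIntegrable 0 1))]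
    apply Finset.sum_congr rfl; intro kk _
    rw [intervalIntegral.integral_add (show IntervalIntegrable (fun θ => (p kk θ)^2) MeasureTheory.volume 0 1 from ((hcp kk).pow 2).intervalIntegrable 0 1)
      (show IntervalIntegrable (fun θ => (q kk θ)^2) MeasureTheory.volume 0 1 from ((hcq kk).pow 2).intervalIntegrable 0 1), hintP kk, hintQ kk,
      ← Finset.sum_add_distrib]
    apply Finset.sum_congr rfl; intro i _
    ring
  have hintB : (∫ θ in (0:ℝ)..1, B θ) = ∑ kk : Fin t, ∑ j : Fin n, (V kk j)^2 := by
    rw [show (fun θ : ℝ => B θ) = fun θ => ∑ kk : Fin t, ((r kk θ)^2 + (w kk θ)^2) from rfl]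
    rw [intervalIntegral.integral_finset_sum (fun kk _ =>
      (show IntervalIntegrable (fun θ => (r kk θ)^2 + (w kk θ)^2) MeasureTheory.volume 0 1 from (((hcr kk).pow 2).add ((hcw kk).pow 2)).intervalIntegrable 0 1))]
    apply Finset.sum_congr rfl; intro kk _
    rw [intervalIntegral.integral_add (show IntervalIntegrable (fun θ => (r kk θ)^2) MeasureTheory.volume 0 1 from ((hcr kk).pow 2).intervalIntegrable 0 1)
      (show IntervalIntegrable (fun θ => (w kk θ)^2) MeasureTheory.volume 0 1 from ((hcw kk).pow 2).intervalIntegrable 0 1), hintR kk, hintW kk,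
      ← Finset.sum_add_distrib]
    apply Finset.sum_congr rfl; intro j _
    ring
  have hAle : ∑ kk : Fin t, ∑ i : Fin n, (U i kk)^2 ≤ (n:ℝ) * a^2 := by
    rw [Finset.sum_comm]
    calc ∑ i : Fin n, ∑ kk : Fin t, (U i kk)^2 ≤ ∑ _i : Fin n, a^2 :=
          Finset.sum_le_sum fun i _ => hU i
      _ = (n:ℝ) * a^2 := by
          simp [Finset.sum_const, Finset.card_univ, nsmul_eq_mul]
  have hBle : ∑ kk : Fin t, ∑ j : Fin n, (V kk j)^2 ≤ (n:ℝ) * b^2 := by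
    rw [Finset.sum_comm]
    calc ∑ j : Fin n, ∑ kk : Fin t, (V kk j)^2 ≤ ∑ _j : Fin n, b^2 :=
          Finset.sum_le_sum fun j _ => hV j
      _ = (n:ℝ) * b^2 := by
          simp [Finset.sum_const, Finset.card_univ, nsmul_eq_mul]
  calc ∑ i : Fin n, ∑ j : Fin n, ((U * V) i j) * kker ((i:ℕ) - (j:ℕ) : ℤ)
      = ∫ θ in (0:ℝ)..1, (1-2*θ) * F θ := hD.symm
    _ ≤ ∫ θ in (0:ℝ)..1, ((b/(2*a)) * A θ + (a/(2*b)) * B θ) :=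
        intervalIntegral.integral_mono_on (by norm_num)
          (hcg.intervalIntegrable 0 1)
          (((continuous_const.mul hcA).add (continuous_const.mul hcB)).intervalIntegrable 0 1)
          hbound
    _ = (b/(2*a)) * (∫ θ in (0:ℝ)..1, A θ) + (a/(2*b)) * (∫ θ in (0:ℝ)..1, B θ) := by
        rw [intervalIntegral.integral_add (show IntervalIntegrable (fun θ => (b/(2*a)) * A θ) MeasureTheory.volume 0 1 from (continuous_const.mul hcA).intervalIntegrable 0 1)
          (show IntervalIntegrable (fun θ => (a/(2*b)) * B θ) MeasureTheory.volume 0 1 from (continuous_const.mul hcB).intervalIntegrable 0 1),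
          intervalIntegral.integral_const_mul, intervalIntegral.integral_const_mul]
    _ = (b/(2*a)) * (∑ kk : Fin t, ∑ i : Fin n, (U i kk)^2)
        + (a/(2*b)) * (∑ kk : Fin t, ∑ j : Fin n, (V kk j)^2) := by rw [hintA, hintB]
    _ ≤ (b/(2*a)) * ((n:ℝ) * a^2) + (a/(2*b)) * ((n:ℝ) * b^2) :=
        add_le_add (mul_le_mul_of_nonneg_left hAle (by positivity))
          (mul_le_mul_of_nonneg_left hBle (by positivity))
    _ = (n:ℝ) * (a*b) := by field_simp; ring

lemma key_lower (n : ℕ) :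
    ((n:ℝ) * Real.log n - n)/π ≤
      ∑ i : Fin n, ∑ j : Fin n,
        (if (j:ℕ) ≤ (i:ℕ) then (1:ℝ) else 0) * kker ((i:ℕ) - (j:ℕ) : ℤ) := by
  have hπ := Real.pi_pos
  have hinner : ∀ i : Fin n,
      (∑ j : Fin n, (if (j:ℕ) ≤ (i:ℕ) then (1:ℝ) else 0) * kker ((i:ℕ) - (j:ℕ) : ℤ))
      = (1/π) * ∑ m ∈ Finset.range (i:ℕ), (1:ℝ)/(m+1) := by
    intro i
    rw [Fin.sum_univ_eq_sum_range (fun j : ℕ => (if j ≤ (i:ℕ) then (1:ℝ) else 0) * kker ((i:ℕ) - (j:ℕ) : ℤ))]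
    rw [← Finset.sum_subset (Finset.range_subset_range.mpr i.isLt)
      (fun x _ hx => by
        simp only [Finset.mem_range, not_lt] at hx
        have : ¬ (x ≤ (i:ℕ)) := by omega
        simp [this])]
    rw [Finset.sum_range_succ]
    have hz : ((i:ℕ) - ((i:ℕ)) : ℤ) = 0 := by ring
    simp only [le_refl, if_true, hz, kker, if_pos rfl, mul_zero, add_zero]
    rw [← Finset.sum_range_reflect]
    rw [Finset.mul_sum]
    apply Finset.sum_congr rfl
    intro j hj
    simp only [Finset.mem_range] at hj
    have h1 : (i:ℕ) - 1 - j ≤ (i:ℕ) := by omega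
    have h2 : ((i:ℕ) - ((i:ℕ) - 1 - j : ℕ) : ℤ) = (j:ℤ) + 1 := by omega
    rw [if_pos h1, h2]
    have : ((j:ℤ)+1) ≠ 0 := by omega
    simp only [kker, this, if_false]
    push_cast
    rw [one_mul]
    field_simp
  simp_rw [hinner]
  rw [← Finset.mul_sum]
  rw [Fin.sum_univ_eq_sum_range (fun i : ℕ => ∑ m ∈ Finset.range i, (1:ℝ)/(m+1))]
  rw [div_eq_mul_one_div, mul_comm ((n:ℝ) * Real.log n - n) (1/π)]
  exact mul_le_mul_of_nonneg_left (sum_harm_lower n) (by positivity)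

/-- The half-graph matrix `G(i,j) = 1_{i ≥ j}` has `γ₂(G) ≥ (1/(2π)) ln n − O(1)`:
every factorization `G = U V` with row norms of `U` at most `a` and column norms of `V`
at most `b` satisfies `a·b ≥ (1/(2π)) ln n − C`. -/
theorem halfgraph_gamma2_lower : ∃ C : ℝ, ∀ (n : ℕ)
    (t : ℕ) (U : Matrix (Fin n) (Fin t) ℝ) (V : Matrix (Fin t) (Fin n) ℝ)
    (a b : ℝ), 0 ≤ a → 0 ≤ b →
    (Matrix.of (fun i j : Fin n => if (j : ℕ) ≤ (i : ℕ) then (1 : ℝ) else 0)) = U * V →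
    (∀ i, Real.sqrt (∑ k, (U i k) ^ 2) ≤ a) →
    (∀ j, Real.sqrt (∑ k, (V k j) ^ 2) ≤ b) →
    (1 / (2 * Real.pi)) * Real.log n - C ≤ a * b := by
  have hπ := Real.pi_pos
  refine ⟨1/π, fun n t U V a b ha hb hfac hU hV => ?_⟩
  have hab : 0 ≤ a * b := mul_nonneg ha hb
  rcases Nat.eq_zero_or_pos n with rfl | hn
  · have h1 : (0:ℝ) < 1/π := by positivity
    simp only [Nat.cast_zero, Real.log_zero, mul_zero, zero_sub]
    linarith
  -- row/column norm bounds squared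
  have hU2 : ∀ i, ∑ k, (U i k)^2 ≤ a^2 := by
    intro i
    have h0 : (0:ℝ) ≤ ∑ k, (U i k)^2 := Finset.sum_nonneg fun k _ => sq_nonneg _
    nlinarith [hU i, Real.sq_sqrt h0, Real.sqrt_nonneg (∑ k, (U i k)^2)]
  have hV2 : ∀ j, ∑ k, (V k j)^2 ≤ b^2 := by
    intro j
    have h0 : (0:ℝ) ≤ ∑ k, (V k j)^2 := Finset.sum_nonneg fun k _ => sq_nonneg _
    nlinarith [hV j, Real.sq_sqrt h0, Real.sqrt_nonneg (∑ k, (V k j)^2)]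
  have hone : (Matrix.of (fun i j : Fin n => if (j : ℕ) ≤ (i : ℕ) then (1 : ℝ) else 0))
      ⟨0, hn⟩ ⟨0, hn⟩ = 1 := by simp
  have hfac0 := congrFun (congrFun hfac ⟨0, hn⟩) ⟨0, hn⟩
  rw [hone] at hfac0
  -- positivity of a and b
  have hapos : 0 < a := by
    rcases ha.lt_or_eq with h | h
    · exact h
    · exfalso
      have hU0 : ∀ k, U ⟨0, hn⟩ k = 0 := by
        intro k
        have h1 := hU2 ⟨0, hn⟩
        rw [← h] at h1
        have h2 := Finset.sum_nonneg (fun k (_ : k ∈ Finset.univ) => sq_nonneg (U ⟨0, hn⟩ k))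
        have h3 := (Finset.sum_eq_zero_iff_of_nonneg
          (fun k (_ : k ∈ Finset.univ) => sq_nonneg (U ⟨0, hn⟩ k))).mp
          (le_antisymm (by linarith [h1]) h2)
        have := h3 k (Finset.mem_univ k)
        exact pow_eq_zero_iff (n := 2) (by norm_num) |>.mp this
      rw [Matrix.mul_apply] at hfac0
      simp [hU0] at hfac0
  have hbpos : 0 < b := by
    rcases hb.lt_or_eq with h | h
    · exact h
    · exfalso
      have hV0 : ∀ k, V k ⟨0, hn⟩ = 0 := by
        intro k
        have h1 := hV2 ⟨0, hn⟩
        rw [← h] at h1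
        have h2 := Finset.sum_nonneg (fun k (_ : k ∈ Finset.univ) => sq_nonneg (V k ⟨0, hn⟩))
        have h3 := (Finset.sum_eq_zero_iff_of_nonneg
          (fun k (_ : k ∈ Finset.univ) => sq_nonneg (V k ⟨0, hn⟩))).mp
          (le_antisymm (by linarith [h1]) h2)
        have := h3 k (Finset.mem_univ k)
        exact pow_eq_zero_iff (n := 2) (by norm_num) |>.mp this
      rw [Matrix.mul_apply] at hfac0
      simp [hV0] at hfac0
  -- the two key estimates
  have hfac' : ∀ i j : Fin n, (if (j:ℕ) ≤ (i:ℕ) then (1:ℝ) else 0) = (U * V) i j := by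
    intro i j
    have := congrFun (congrFun hfac i) j
    simpa using this
  have hlow := key_lower n
  simp_rw [hfac'] at hlow
  have hup := key_upper n t U V a b hapos hbpos hU2 hV2
  have hchain : ((n:ℝ) * Real.log n - n)/π ≤ (n:ℝ) * (a*b) := le_trans hlow hup
  have hnR : (0:ℝ) < n := by exact_mod_cast hn
  have hL : 0 ≤ Real.log n := Real.log_nonneg (by exact_mod_cast hn)
  have hchain' : (n:ℝ) * Real.log n - n ≤ ((n:ℝ) * (a*b)) * π := (div_le_iff₀ hπ).mp hchain
  have key : Real.log n - 1 ≤ π * (a*b) := by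
    have h1 : (n:ℝ) * (Real.log n - 1) ≤ (n:ℝ) * (π * (a*b)) := by nlinarith [hchain']
    exact (mul_le_mul_iff_right₀ hnR).mp h1
  have h2 : 1/(2*π) * Real.log n ≤ 1/π * Real.log n :=
    mul_le_mul_of_nonneg_right (one_div_le_one_div_of_le hπ (by linarith)) hL
  have h3 : 1/π * Real.log n - 1/π ≤ a*b := by
    have h4 := mul_le_mul_of_nonneg_left key (le_of_lt (by positivity : (0:ℝ) < 1/π))
    have h5 : (1/π) * (π*(a*b)) = a*b := by field_simp
    nlinarith [h4, h5]
  linarith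
end

section
/- Every boolean matrix A with γ₂(A) ≤ λ has threshold dimension at most 2^{O(λ)}; that is, there is an absolute constant C such that TD(A) ≤ C·e^{2πλ + C}. -/
open scoped BigOperators Matrix

open Finset in
private lemma cs_sqrt {ι : Type*} (s : Finset ι) (f g : ι → ℝ)
    (hf : ∀ i ∈ s, 0 ≤ f i) (hg : ∀ i ∈ s, 0 ≤ g i) :
    ∑ i ∈ s, f i * g i ≤ Real.sqrt (∑ i ∈ s, f i ^ 2) * Real.sqrt (∑ i ∈ s, g i ^ 2) := by
  have h1 : (∑ i ∈ s, f i * g i) ^ 2 ≤ (∑ i ∈ s, f i ^ 2) * ∑ i ∈ s, g i ^ 2 :=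
    Finset.sum_mul_sq_le_sq_mul_sq s f g
  have h0 : 0 ≤ ∑ i ∈ s, f i * g i :=
    Finset.sum_nonneg fun i hi => mul_nonneg (hf i hi) (hg i hi)
  calc ∑ i ∈ s, f i * g i = Real.sqrt ((∑ i ∈ s, f i * g i)^2) := (Real.sqrt_sq h0).symm
    _ ≤ Real.sqrt ((∑ i ∈ s, f i ^ 2) * ∑ i ∈ s, g i ^ 2) := Real.sqrt_le_sqrt h1
    _ = _ := Real.sqrt_mul (Finset.sum_nonneg fun i _ => sq_nonneg _) _

open Finset in
private lemma sub_one_mul_sum_mul_pow (z : ℂ) (n : ℕ) :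
    (z - 1) * ∑ a ∈ range n, (a : ℂ) * z ^ a = n * z ^ n - z ^ n + 1 - ∑ a ∈ range n, z ^ a := by
  induction n with
  | zero => simp
  | succ n ih =>
    rw [Finset.sum_range_succ, Finset.sum_range_succ (f := fun a => z ^ a), mul_add]
    rw [ih]
    push_cast
    ring

open Finset in
private lemma log_le_harmonic (K : ℕ) :
    Real.log (K + 1) ≤ ∑ k ∈ Finset.Icc 1 K, (1 : ℝ) / k := by
  induction K with
  | zero => simp
  | succ K ih =>
    rw [Finset.sum_Icc_succ_top (by omega)]
    have hx : (0:ℝ) < ((K:ℝ)+2)/((K:ℝ)+1) := by positivity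
    have h := Real.log_le_sub_one_of_pos hx
    rw [Real.log_div (by positivity) (by positivity)] at h
    have h2 : ((K:ℝ)+2)/((K:ℝ)+1) - 1 = 1/((K:ℝ)+1) := by
      field_simp
      norm_num
    have h3 : ((K:ℕ):ℝ) + 1 + 1 = (K:ℝ) + 2 := by ring
    push_cast
    push_cast at ih
    rw [h3]
    linarith

open Finset in
private lemma staircase_count (d : ℕ) (f : ℕ → ℝ) :
    ∑ s ∈ range d, ∑ t ∈ range d, (if t ≤ s then f (s - t) else 0)
      = ∑ k ∈ range d, ((d : ℝ) - k) * f k := by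
  have hfilt : ∀ s, s < d → (range d).filter (fun t => t ≤ s) = range (s+1) := by
    intro s hs; ext x; simp; omega
  have h1 : ∀ s ∈ range d, ∑ t ∈ range d, (if t ≤ s then f (s - t) else 0)
      = ∑ k ∈ range (s+1), f k := by
    intro s hs
    rw [← Finset.sum_filter, hfilt s (mem_range.mp hs)]
    have := Finset.sum_range_reflect (fun k => f k) (s+1)
    simp only [Nat.add_sub_cancel] at this
    exact this
  rw [Finset.sum_congr rfl h1]
  have h2 : ∀ s ∈ range d, ∑ k ∈ range (s+1), f k
      = ∑ k ∈ range d, (if k ≤ s then f k else 0) := by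
    intro s hs
    rw [← Finset.sum_filter, hfilt s (mem_range.mp hs)]
  rw [Finset.sum_congr rfl h2, Finset.sum_comm]
  refine Finset.sum_congr rfl fun k hk => ?_
  rw [← Finset.sum_filter]
  have : (range d).filter (fun s => k ≤ s) = Finset.Ico k d := by
    ext x; simp; omega
  rw [this, Finset.sum_const, Nat.card_Ico, nsmul_eq_mul]
  rw [Nat.cast_sub (le_of_lt (mem_range.mp hk))]

private lemma zeta_pow (N : ℕ) (hN : 0 < N) (j : ℕ) :
    Complex.exp (2*Real.pi*Complex.I/N) ^ j
      = Complex.exp (((2*Real.pi*j/N : ℝ) : ℂ) * Complex.I) := by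
  rw [← Complex.exp_nat_mul]
  congr 1
  have hN' : (N:ℂ) ≠ 0 := Nat.cast_ne_zero.mpr hN.ne'
  push_cast
  field_simp

private lemma zeta_pow_N (N : ℕ) (hN : 0 < N) :
    Complex.exp (2*Real.pi*Complex.I/N) ^ N = 1 := by
  rw [zeta_pow N hN N]
  have hN' : ((N:ℝ)) ≠ 0 := Nat.cast_ne_zero.mpr hN.ne'
  rw [show (2*Real.pi*(N:ℝ)/N : ℝ) = 2*Real.pi by field_simp]
  push_cast
  exact Complex.exp_two_pi_mul_I

private lemma zeta_pow_ne_one (N : ℕ) (hN : 0 < N) (j : ℕ) (h1 : 0 < j) (h2 : j < N) :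
    Complex.exp (2*Real.pi*Complex.I/N) ^ j ≠ 1 := by
  rw [zeta_pow N hN j]
  intro h
  rw [Complex.exp_eq_one_iff] at h
  obtain ⟨k, hk⟩ := h
  have him := congrArg Complex.im hk
  simp [Complex.mul_im, Complex.mul_re] at him
  -- him : 2*π*j/N = k * (2*π)
  have hπ : (0:ℝ) < Real.pi := Real.pi_pos
  have hN' : ((N:ℝ)) ≠ 0 := Nat.cast_ne_zero.mpr hN.ne'
  have hj : (j:ℝ) = (k:ℝ) * N := by
    field_simp at him
    nlinarith [him]
  have hjz : (j:ℤ) = k * N := by exact_mod_cast hj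
  rcases le_or_gt k 0 with hk' | hk'
  · have : (k:ℤ) * N ≤ 0 := mul_nonpos_iff.mpr (Or.inr ⟨hk', by positivity⟩)
    omega
  · have hk1 : (1:ℤ) ≤ k := hk'
    have : (N:ℤ) ≤ k * N := le_mul_of_one_le_left (by positivity) hk1
    omega

open Finset in
set_option maxHeartbeats 2000000 in
/-- Every boolean matrix with `γ₂(A) ≤ λ` has threshold dimension at most `2^{O(λ)}`:
there is an absolute constant `C` such that `TD(A) ≤ C · e^{2πλ + C}`. -/
theorem td_le_exp_gamma2 : ∃ C : ℝ, 0 < C ∧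
    ∀ (lam : ℝ), 0 ≤ lam → ∀ (m n : ℕ) (A : Matrix (Fin m) (Fin n) ℝ),
      (∀ i j, A i j = 0 ∨ A i j = 1) →
      (∃ (t : ℕ) (U : Matrix (Fin m) (Fin t) ℝ) (V : Matrix (Fin t) (Fin n) ℝ),
        A = U * V ∧ (∀ i, ∑ k, (U i k) ^ 2 ≤ 1) ∧ (∀ j, ∑ k, (V k j) ^ 2 ≤ lam ^ 2)) →
      ∀ (d : ℕ) (r : Fin d → Fin m) (c : Fin d → Fin n),
        (∀ s t, A (r s) (c t) = 1 ↔ t ≤ s) →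
        (d : ℝ) ≤ C * Real.exp (2 * Real.pi * lam + C) := by
  refine ⟨7, by norm_num, ?_⟩
  intro lam hlam m n A hbool hfac d r c hsc
  obtain ⟨τ, U, V, hA, hU, hV⟩ := hfac
  rcases Nat.eq_zero_or_pos d with hd0 | hd
  · subst hd0
    simp only [Nat.cast_zero]
    positivity
  -- setup
  set N : ℕ := 2 * d with hNdef
  have hNpos : 0 < N := by omega
  have hNR : ((N:ℝ)) ≠ 0 := Nat.cast_ne_zero.mpr hNpos.ne'
  have hNC : ((N:ℂ)) ≠ 0 := Nat.cast_ne_zero.mpr hNpos.ne'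
  have hdR : (0:ℝ) < d := by exact_mod_cast hd
  have hπ : (0:ℝ) < Real.pi := Real.pi_pos
  set ζ : ℂ := Complex.exp (2*Real.pi*Complex.I/N) with hζdef
  set ξ : ℂ := Complex.exp (-(2*Real.pi*Complex.I/N)) with hξdef
  have hζξ : ζ * ξ = 1 := by
    rw [hζdef, hξdef, ← Complex.exp_add]
    simp
  have hconj : (starRingEnd ℂ) ζ = ξ := by
    rw [hζdef, hξdef, ← Complex.exp_conj]
    congr 1
    simp [map_div₀, Complex.conj_I, map_ofNat]
    ring
  have hζN : ζ ^ N = 1 := zeta_pow_N N hNpos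
  have hζj : ∀ j : ℕ, 0 < j → j < N → ζ ^ j ≠ 1 := fun j h1 h2 => zeta_pow_ne_one N hNpos j h1 h2
  have hξpow : ∀ j : ℕ, ξ ^ j = (starRingEnd ℂ) (ζ ^ j) := by
    intro j; rw [map_pow, hconj]
  have hξN : ξ ^ N = 1 := by rw [hξpow, hζN, map_one]
  have hξj : ∀ j : ℕ, 0 < j → j < N → ξ ^ j ≠ 1 := by
    intro j h1 h2 h
    apply hζj j h1 h2
    have h' : (starRingEnd ℂ) (ξ ^ j) = 1 := by rw [h, map_one]
    rwa [hξpow, Complex.conj_conj] at h'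
  -- vectors
  set uc : Fin d → Fin τ → ℂ := fun s k => ((U (r s) k : ℝ) : ℂ) with hucdef
  set yc : Fin d → Fin τ → ℂ := fun t k => ((V k (c t) : ℝ) : ℂ) with hycdef
  have hin : ∀ s t : Fin d, (∑ k, uc s k * yc t k) = if (t:ℕ) ≤ (s:ℕ) then 1 else 0 := by
    intro s t
    have h1 : A (r s) (c t) = ∑ k, U (r s) k * V k (c t) := by rw [hA, Matrix.mul_apply]
    have key : (∑ k, uc s k * yc t k) = ((A (r s) (c t) : ℝ) : ℂ) := by
      rw [h1]; push_cast; rfl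
    rw [key]
    by_cases h : (t:ℕ) ≤ (s:ℕ)
    · rw [if_pos h, (hsc s t).mpr (Fin.le_def.mpr h)]
      simp
    · have hne : A (r s) (c t) ≠ 1 := fun hc => h (Fin.le_def.mp ((hsc s t).mp hc))
      have h0 : A (r s) (c t) = 0 := (hbool _ _).resolve_right hne
      rw [if_neg h, h0]
      simp
  -- Fourier data
  set F : ℕ → Fin τ → ℂ := fun a k => ∑ s : Fin d, ζ^(a*(s:ℕ)) * uc s k with hFdef
  set G : ℕ → Fin τ → ℂ := fun a k => ∑ t : Fin d, ξ^(a*(t:ℕ)) * yc t k with hGdef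
  set g : ℕ → ℂ := fun a => Complex.I * (2*(a:ℂ) - N) / N with hgdef
  set hh : ℕ → ℂ := fun j => ∑ a ∈ range N, g a * ζ^(a*j) with hhdef
  set SS : ℂ := ∑ a ∈ range N, g a * (∑ k, F a k * G a k) with hSSdef
  -- pow manipulation lemmas
  have hpow1 : ∀ (a s t : ℕ), t ≤ s → ζ^(a*s) * ξ^(a*t) = ζ^(a*(s-t)) := by
    intro a s t hts
    rw [show a*s = a*(s-t) + a*t by rw [← Nat.mul_add, Nat.sub_add_cancel hts]]
    rw [pow_add, mul_assoc, ← mul_pow, hζξ, one_pow, mul_one]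
  have hpow2 : ∀ (a s t : ℕ), s ≤ t → ζ^(a*s) * ξ^(a*t) = ξ^(a*(t-s)) := by
    intro a s t hst
    rw [show a*t = a*(t-s) + a*s by rw [← Nat.mul_add, Nat.sub_add_cancel hst]]
    rw [pow_add, mul_comm (ξ^(a*(t-s))) _, ← mul_assoc, ← mul_pow, hζξ, one_pow, one_mul]
  -- orthogonality
  have ortho : ∀ s t : ℕ, s < d → t < d →
      (∑ a ∈ range N, ζ^(a*s) * ξ^(a*t)) = if s = t then (N:ℂ) else 0 := by
    intro s t hs ht
    by_cases hst : s = t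
    · subst hst
      rw [if_pos rfl]
      have hone : ∀ a ∈ range N, ζ^(a*s) * ξ^(a*s) = 1 := by
        intro a _
        rw [← mul_pow, hζξ, one_pow]
      rw [Finset.sum_congr rfl hone, Finset.sum_const, Finset.card_range, nsmul_eq_mul, mul_one]
    · rw [if_neg hst]
      rcases Nat.lt_or_ge t s with hlt | hge
      · have hterm : ∀ a ∈ range N, ζ^(a*s) * ξ^(a*t) = (ζ^(s-t))^a := by
          intro a _
          rw [hpow1 a s t hlt.le, mul_comm a (s-t), pow_mul]
        have hz1 : ζ^(s-t) ≠ 1 := hζj (s-t) (by omega) (by omega)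
        have hzN : (ζ^(s-t))^N = 1 := by rw [pow_right_comm, hζN, one_pow]
        rw [Finset.sum_congr rfl hterm, geom_sum_eq hz1, hzN, sub_self, zero_div]
      · have hst' : s < t := by omega
        have hterm : ∀ a ∈ range N, ζ^(a*s) * ξ^(a*t) = (ξ^(t-s))^a := by
          intro a _
          rw [hpow2 a s t hst'.le, mul_comm a (t-s), pow_mul]
        have hz1 : ξ^(t-s) ≠ 1 := hξj (t-s) (by omega) (by omega)
        have hzN : (ξ^(t-s))^N = 1 := by rw [pow_right_comm, hξN, one_pow]
        rw [Finset.sum_congr rfl hterm, geom_sum_eq hz1, hzN, sub_self, zero_div]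
  -- LHS identity
  have hSS1 : SS = ∑ s : Fin d, ∑ t : Fin d,
      (if (t:ℕ) ≤ (s:ℕ) then hh ((s:ℕ) - (t:ℕ)) else 0) := by
    have hP : ∀ a : ℕ, (∑ k, F a k * G a k)
        = ∑ s : Fin d, ∑ t : Fin d, (ζ^(a*(s:ℕ)) * ξ^(a*(t:ℕ))) * (if (t:ℕ) ≤ (s:ℕ) then 1 else 0) := by
      intro a
      have hk : ∀ k : Fin τ, F a k * G a k
          = ∑ s : Fin d, ∑ t : Fin d, (ζ^(a*(s:ℕ)) * ξ^(a*(t:ℕ))) * (uc s k * yc t k) := by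
        intro k
        simp only [hFdef, hGdef]
        rw [Finset.sum_mul_sum]
        exact Finset.sum_congr rfl fun s _ => Finset.sum_congr rfl fun t _ => by ring
      calc (∑ k, F a k * G a k)
          = ∑ k, ∑ s : Fin d, ∑ t : Fin d, (ζ^(a*(s:ℕ)) * ξ^(a*(t:ℕ))) * (uc s k * yc t k) :=
            Finset.sum_congr rfl (fun k _ => hk k)
        _ = ∑ s : Fin d, ∑ k, ∑ t : Fin d, (ζ^(a*(s:ℕ)) * ξ^(a*(t:ℕ))) * (uc s k * yc t k) :=
            Finset.sum_comm
        _ = ∑ s : Fin d, ∑ t : Fin d, ∑ k, (ζ^(a*(s:ℕ)) * ξ^(a*(t:ℕ))) * (uc s k * yc t k) :=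
            Finset.sum_congr rfl (fun s _ => Finset.sum_comm)
        _ = ∑ s : Fin d, ∑ t : Fin d, (ζ^(a*(s:ℕ)) * ξ^(a*(t:ℕ))) * (if (t:ℕ) ≤ (s:ℕ) then 1 else 0) := by
            refine Finset.sum_congr rfl fun s _ => Finset.sum_congr rfl fun t _ => ?_
            rw [← Finset.mul_sum, hin s t]
    rw [hSSdef]
    have e1 : ∀ a ∈ range N, g a * (∑ k, F a k * G a k)
        = ∑ s : Fin d, ∑ t : Fin d, g a * ((ζ^(a*(s:ℕ)) * ξ^(a*(t:ℕ))) * (if (t:ℕ) ≤ (s:ℕ) then 1 else 0)) := by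
      intro a _
      rw [hP a, Finset.mul_sum]
      exact Finset.sum_congr rfl fun s _ => by rw [Finset.mul_sum]
    rw [Finset.sum_congr rfl e1, Finset.sum_comm]
    refine Finset.sum_congr rfl fun s _ => ?_
    rw [Finset.sum_comm]
    refine Finset.sum_congr rfl fun t _ => ?_
    by_cases h : (t:ℕ) ≤ (s:ℕ)
    · have e2 : ∀ a ∈ range N, g a * ((ζ^(a*(s:ℕ)) * ξ^(a*(t:ℕ))) * (if (t:ℕ) ≤ (s:ℕ) then 1 else 0))
          = g a * ζ^(a*((s:ℕ)-(t:ℕ))) := by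
        intro a _
        rw [if_pos h, mul_one, hpow1 a (s:ℕ) (t:ℕ) h]
      rw [Finset.sum_congr rfl e2, if_pos h]
    · have e2 : ∀ a ∈ range N, g a * ((ζ^(a*(s:ℕ)) * ξ^(a*(t:ℕ))) * (if (t:ℕ) ≤ (s:ℕ) then 1 else 0)) = 0 := by
        intro a _
        rw [if_neg h, mul_zero, mul_zero]
      rw [Finset.sum_congr rfl e2, if_neg h, Finset.sum_const_zero]
  -- hh values
  have hh0 : (hh 0).re = 0 := by
    simp only [hhdef, Nat.mul_zero, pow_zero, mul_one]
    rw [Complex.re_sum]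
    apply Finset.sum_eq_zero
    intro a _
    simp only [hgdef]
    simp [Complex.div_re, Complex.mul_re, Complex.mul_im, Complex.normSq_apply]
  have hhval : ∀ j, 0 < j → j < N → hh j = 2*Complex.I/(ζ^j - 1) := by
    intro j h1 h2
    have hz1 : ζ^j ≠ 1 := hζj j h1 h2
    have hz1' : ζ^j - 1 ≠ 0 := sub_ne_zero.mpr hz1
    have hzN : (ζ^j)^N = 1 := by rw [pow_right_comm, hζN, one_pow]
    have hgeom : ∑ a ∈ range N, (ζ^j)^a = 0 := by
      rw [geom_sum_eq hz1, hzN, sub_self, zero_div]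
    have hwsum : ∑ a ∈ range N, (a:ℂ) * (ζ^j)^a = N / (ζ^j - 1) := by
      have hq := sub_one_mul_sum_mul_pow (ζ^j) N
      rw [hzN, hgeom] at hq
      rw [eq_div_iff hz1', mul_comm]
      rw [hq]
      ring
    have hterm : ∀ a ∈ range N, g a * ζ^(a*j)
        = (2*Complex.I/N) * ((a:ℂ)*(ζ^j)^a) - Complex.I * (ζ^j)^a := by
      intro a _
      simp only [hgdef]
      rw [mul_comm a j, pow_mul]
      field_simp
    simp only [hhdef]
    rw [Finset.sum_congr rfl hterm, Finset.sum_sub_distrib, ← Finset.mul_sum, ← Finset.mul_sum]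
    rw [hwsum, hgeom, mul_zero, sub_zero]
    field_simp
  have hhre : ∀ j, 0 < j → j < N →
      (hh j).re = 2*Real.sin (2*Real.pi*j/N) / (2 - 2*Real.cos (2*Real.pi*j/N)) := by
    intro j h1 h2
    have hz : ζ^j = Complex.exp (((2*Real.pi*j/N : ℝ):ℂ) * Complex.I) := zeta_pow N hNpos j
    rw [hhval j h1 h2, hz]
    set φ : ℝ := 2*Real.pi*(j:ℝ)/N with hφdef
    have hre : (Complex.exp ((φ:ℂ)*Complex.I) - 1).re = Real.cos φ - 1 := by
      simp [Complex.exp_ofReal_mul_I_re]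
    have him : (Complex.exp ((φ:ℂ)*Complex.I) - 1).im = Real.sin φ := by
      simp [Complex.exp_ofReal_mul_I_im]
    have hnsq : Complex.normSq (Complex.exp ((φ:ℂ)*Complex.I) - 1) = 2 - 2*Real.cos φ := by
      rw [Complex.normSq_apply, hre, him]
      nlinarith [Real.sin_sq_add_cos_sq φ]
    rw [Complex.div_re, hnsq, hre, him]
    simp [Complex.mul_re, Complex.mul_im]
  -- real lower bounds on (hh j).re
  have hNR2 : (N:ℝ) = 2*(d:ℝ) := by rw [hNdef]; push_cast; ring
  have hrenn : ∀ j, j < d → 0 ≤ (hh j).re := by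
    intro j hj
    rcases Nat.eq_zero_or_pos j with h0 | h0
    · subst h0; rw [hh0]
    · have hjN : j < N := by omega
      rw [hhre j h0 hjN]
      set φ : ℝ := 2*Real.pi*(j:ℝ)/N with hφdef
      have hjR : (1:ℝ) ≤ (j:ℝ) := by exact_mod_cast h0
      have hjdR : (j:ℝ) < (d:ℝ) := by exact_mod_cast hj
      have hφpos : 0 < φ := by rw [hφdef]; positivity
      have hφlt : φ < Real.pi := by
        rw [hφdef, hNR2, div_lt_iff₀ (by positivity)]
        nlinarith
      have hsin : 0 ≤ Real.sin φ := Real.sin_nonneg_of_nonneg_of_le_pi hφpos.le hφlt.le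
      have hcos : Real.cos φ < 1 := by
        have := Real.cos_lt_cos_of_nonneg_of_le_pi (le_refl 0) hφlt.le hφpos
        rwa [Real.cos_zero] at this
      apply div_nonneg (by linarith) (by linarith)
  set K : ℕ := d / 4 with hKdef
  have hrelb : ∀ j, 1 ≤ j → j ≤ K → 2*(d:ℝ)/(Real.pi*j) - 1 ≤ (hh j).re := by
    intro j hj1 hjK
    have h4j : 4*j ≤ d := by omega
    have hjd : j < d := by omega
    have hjN : j < N := by omega
    rw [hhre j (by omega) hjN]
    set φ : ℝ := 2*Real.pi*(j:ℝ)/N with hφdef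
    have hjR : (1:ℝ) ≤ (j:ℝ) := by exact_mod_cast hj1
    have h4jR : 4*(j:ℝ) ≤ (d:ℝ) := by exact_mod_cast h4j
    have hφpos : 0 < φ := by rw [hφdef]; positivity
    have hφle : φ ≤ Real.pi/4 := by
      rw [hφdef, hNR2, div_le_div_iff₀ (by positivity) (by norm_num)]
      nlinarith
    have hφ1 : φ ≤ 1 := by nlinarith [Real.pi_le_four]
    have hsin : φ - φ^3/4 ≤ Real.sin φ := le_trans (by nlinarith [pow_pos hφpos 3]) (Real.sin_gt_sub_cube hφpos).le
    have hcos2 : 1 - φ^2/2 ≤ Real.cos φ := Real.one_sub_sq_div_two_le_cos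
    have hcos1 : Real.cos φ < 1 := by
      have h := Real.cos_lt_cos_of_nonneg_of_le_pi (le_refl 0)
        (by nlinarith [Real.pi_pos] : φ ≤ Real.pi) hφpos
      rwa [Real.cos_zero] at h
    have hden : 0 < 2 - 2*Real.cos φ := by linarith
    have h2φ : 2*(d:ℝ)/(Real.pi*j) = 2/φ := by
      rw [hφdef, hNR2]
      field_simp
    rw [h2φ, show 2/φ - 1 = (2-φ)/φ by field_simp]
    rw [div_le_div_iff₀ hφpos hden]
    nlinarith [hsin, hcos2, hφpos, hφ1, mul_pos hφpos hφpos,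
      mul_nonneg (mul_nonneg hφpos.le hφpos.le) hφpos.le]
  -- lower bound for SS.re
  have hlower : (3/(2*Real.pi)) * (d:ℝ)^2 * Real.log (K+1) - (d:ℝ)^2/4 ≤ SS.re := by
    have hTre : SS.re = ∑ s : Fin d, ∑ t : Fin d,
        (if (t:ℕ) ≤ (s:ℕ) then (hh ((s:ℕ)-(t:ℕ))).re else 0) := by
      rw [hSS1, Complex.re_sum]
      refine Finset.sum_congr rfl fun s _ => ?_
      rw [Complex.re_sum]
      refine Finset.sum_congr rfl fun t _ => ?_
      rw [apply_ite Complex.re, Complex.zero_re]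
    have hT2 : SS.re = ∑ k ∈ range d, ((d:ℝ) - k) * (hh k).re := by
      rw [hTre]
      rw [Fin.sum_univ_eq_sum_range
        (fun i => ∑ t : Fin d, (if (t:ℕ) ≤ i then (hh (i-(t:ℕ))).re else 0)) d]
      rw [Finset.sum_congr rfl (fun i (_ : i ∈ range d) =>
        Fin.sum_univ_eq_sum_range (fun tt => if tt ≤ i then (hh (i-tt)).re else 0) d)]
      exact staircase_count d (fun k => (hh k).re)
    rw [hT2]
    have hsub : Finset.Icc 1 K ⊆ range d := by
      intro x hx
      simp only [Finset.mem_Icc] at hx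
      simp only [Finset.mem_range]
      omega
    have hmono : ∑ k ∈ Finset.Icc 1 K, ((d:ℝ)-k)*(hh k).re
        ≤ ∑ k ∈ range d, ((d:ℝ)-k)*(hh k).re := by
      apply Finset.sum_le_sum_of_subset_of_nonneg hsub
      intro k hk _
      have hkd : k < d := Finset.mem_range.mp hk
      have : (k:ℝ) ≤ (d:ℝ) := by exact_mod_cast hkd.le
      exact mul_nonneg (by linarith) (hrenn k hkd)
    have hterm : ∀ k ∈ Finset.Icc 1 K,
        3/(2*Real.pi)*(d:ℝ)^2*(1/k) - d ≤ ((d:ℝ)-k)*(hh k).re := by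
      intro k hk
      simp only [Finset.mem_Icc] at hk
      obtain ⟨hk1, hkK⟩ := hk
      have h4k : 4*k ≤ d := by omega
      have hkR : (1:ℝ) ≤ (k:ℝ) := by exact_mod_cast hk1
      have h4kR : 4*(k:ℝ) ≤ (d:ℝ) := by exact_mod_cast h4k
      have hkpos : (0:ℝ) < k := by linarith
      have hA1 : (3:ℝ)/4*(d:ℝ) ≤ (d:ℝ)-k := by linarith
      have hB : (0:ℝ) ≤ 2*(d:ℝ)/(Real.pi*k) - 1 := by
        rw [sub_nonneg, le_div_iff₀ (by positivity)]
        nlinarith [Real.pi_le_four]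
      have hmul := mul_le_mul hA1 (hrelb k hk1 hkK) hB (by linarith : (0:ℝ) ≤ (d:ℝ)-k)
      have heq : (3/4*(d:ℝ))*(2*(d:ℝ)/(Real.pi*k) - 1) = 3/(2*Real.pi)*(d:ℝ)^2*(1/k) - 3/4*(d:ℝ) := by
        field_simp
        ring
      rw [heq] at hmul
      linarith
    have hsum1 : ∑ k ∈ Finset.Icc 1 K, (3/(2*Real.pi)*(d:ℝ)^2*(1/k) - d)
        ≤ ∑ k ∈ Finset.Icc 1 K, ((d:ℝ)-k)*(hh k).re := Finset.sum_le_sum hterm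
    have hsum2 : ∑ k ∈ Finset.Icc 1 K, (3/(2*Real.pi)*(d:ℝ)^2*(1/k) - d)
        = 3/(2*Real.pi)*(d:ℝ)^2*(∑ k ∈ Finset.Icc 1 K, 1/(k:ℝ)) - d*K := by
      rw [Finset.sum_sub_distrib, ← Finset.mul_sum, Finset.sum_const, Nat.card_Icc]
      simp only [Nat.add_sub_cancel, nsmul_eq_mul]
      ring
    have hharm := log_le_harmonic K
    have hKd : 4*(K:ℝ) ≤ (d:ℝ) := by
      have : 4*K ≤ d := by omega
      exact_mod_cast this
    have hdd : 0 ≤ 3/(2*Real.pi)*(d:ℝ)^2 := by positivity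
    have h5 : 3/(2*Real.pi)*(d:ℝ)^2*Real.log (K+1)
        ≤ 3/(2*Real.pi)*(d:ℝ)^2*(∑ k ∈ Finset.Icc 1 K, 1/(k:ℝ)) :=
      mul_le_mul_of_nonneg_left hharm hdd
    have h6 : (d:ℝ)*K ≤ (d:ℝ)^2/4 := by nlinarith
    linarith
  -- upper bound for SS.re
  have hconj2 : (starRingEnd ℂ) ξ = ζ := by rw [← hconj, Complex.conj_conj]
  have hupper : SS.re ≤ 2 * (d:ℝ)^2 * lam := by
    set Sf : ℕ → ℝ := fun a => ∑ k, ‖F a k‖^2 with hSfdef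
    set Sg : ℕ → ℝ := fun a => ∑ k, ‖G a k‖^2 with hSgdef
    have hSfnn : ∀ a, 0 ≤ Sf a := fun a => Finset.sum_nonneg fun k _ => sq_nonneg _
    have hSgnn : ∀ a, 0 ≤ Sg a := fun a => Finset.sum_nonneg fun k _ => sq_nonneg _
    -- termwise bound
    have hg1 : ∀ a ∈ range N, ‖g a‖ ≤ 1 := by
      intro a ha
      have haN : a < N := Finset.mem_range.mp ha
      have haR : (a:ℝ) < N := by exact_mod_cast haN
      simp only [hgdef]
      rw [norm_div, norm_mul, Complex.norm_I, one_mul]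
      rw [show (2*(a:ℂ)-(N:ℂ)) = (((2*(a:ℝ)-(N:ℝ)):ℝ):ℂ) by push_cast; ring]
      rw [Complex.norm_real, Real.norm_eq_abs, Complex.norm_natCast]
      rw [div_le_one (by positivity)]
      rw [abs_le]
      constructor <;> [nlinarith; nlinarith]
    have habs1 : ∀ a ∈ range N, ‖g a * ∑ k, F a k * G a k‖
        ≤ Real.sqrt (Sf a) * Real.sqrt (Sg a) := by
      intro a ha
      rw [norm_mul]
      have h1 : ‖∑ k, F a k * G a k‖ ≤ ∑ k, ‖F a k‖ * ‖G a k‖ := by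
        refine le_trans (norm_sum_le _ _) ?_
        exact le_of_eq (Finset.sum_congr rfl fun k _ => norm_mul _ _)
      have h2 : ∑ k, ‖F a k‖ * ‖G a k‖
          ≤ Real.sqrt (Sf a) * Real.sqrt (Sg a) :=
        cs_sqrt Finset.univ _ _ (fun k _ => (norm_nonneg _)) (fun k _ => (norm_nonneg _))
      calc ‖g a‖ * ‖∑ k, F a k * G a k‖
          ≤ 1 * (Real.sqrt (Sf a) * Real.sqrt (Sg a)) := by
            apply mul_le_mul (hg1 a ha) (h1.trans h2) (norm_nonneg _) (by norm_num)
        _ = Real.sqrt (Sf a) * Real.sqrt (Sg a) := one_mul _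
    have hcs2 : ∑ a ∈ range N, Real.sqrt (Sf a) * Real.sqrt (Sg a)
        ≤ Real.sqrt (∑ a ∈ range N, Sf a) * Real.sqrt (∑ a ∈ range N, Sg a) := by
      have h := cs_sqrt (range N) (fun a => Real.sqrt (Sf a)) (fun a => Real.sqrt (Sg a))
        (fun a _ => Real.sqrt_nonneg _) (fun a _ => Real.sqrt_nonneg _)
      rw [Finset.sum_congr rfl (fun a (_ : a ∈ range N) => Real.sq_sqrt (hSfnn a)),
        Finset.sum_congr rfl (fun a (_ : a ∈ range N) => Real.sq_sqrt (hSgnn a))] at h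
      exact h
    -- Parseval for F
    have hconjF : ∀ (a:ℕ) (k : Fin τ), (starRingEnd ℂ) (F a k) = ∑ s : Fin d, ξ^(a*(s:ℕ)) * uc s k := by
      intro a k
      simp only [hFdef, hucdef]
      rw [map_sum]
      refine Finset.sum_congr rfl fun s _ => ?_
      rw [map_mul, map_pow, hconj, Complex.conj_ofReal]
    have hconjG : ∀ (a:ℕ) (k : Fin τ), (starRingEnd ℂ) (G a k) = ∑ t : Fin d, ζ^(a*(t:ℕ)) * yc t k := by
      intro a k
      simp only [hGdef, hycdef]
      rw [map_sum]
      refine Finset.sum_congr rfl fun t _ => ?_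
      rw [map_mul, map_pow, hconj2, Complex.conj_ofReal]
    have CF : ∀ k : Fin τ, ∑ a ∈ range N, (F a k * (starRingEnd ℂ) (F a k))
        = (N:ℂ) * ∑ s : Fin d, uc s k * uc s k := by
      intro k
      have hterm : ∀ a ∈ range N, F a k * (starRingEnd ℂ) (F a k)
          = ∑ s : Fin d, ∑ s' : Fin d, (ζ^(a*(s:ℕ)) * ξ^(a*(s':ℕ))) * (uc s k * uc s' k) := by
        intro a _
        rw [hconjF]
        simp only [hFdef]
        rw [Finset.sum_mul_sum]
        exact Finset.sum_congr rfl fun x _ => Finset.sum_congr rfl fun x' _ => by ring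
      rw [Finset.sum_congr rfl hterm, Finset.sum_comm]
      have e1 : ∀ s : Fin d, (s ∈ Finset.univ) → ∑ a ∈ range N, ∑ s' : Fin d,
          (ζ^(a*(s:ℕ)) * ξ^(a*(s':ℕ))) * (uc s k * uc s' k)
          = ∑ s' : Fin d, (if (s:ℕ) = (s':ℕ) then (N:ℂ) else 0) * (uc s k * uc s' k) := by
        intro s _
        rw [Finset.sum_comm]
        refine Finset.sum_congr rfl fun s' _ => ?_
        rw [← Finset.sum_mul, ortho (s:ℕ) (s':ℕ) s.isLt s'.isLt]
      rw [Finset.sum_congr rfl e1, Finset.mul_sum]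
      refine Finset.sum_congr rfl fun s _ => ?_
      rw [Finset.sum_eq_single s]
      · rw [if_pos rfl]
      · intro b _ hb
        rw [if_neg (fun hc => hb (Fin.val_injective hc).symm), zero_mul]
      · intro hs
        exact absurd (Finset.mem_univ s) hs
    have CG : ∀ k : Fin τ, ∑ a ∈ range N, (G a k * (starRingEnd ℂ) (G a k))
        = (N:ℂ) * ∑ t : Fin d, yc t k * yc t k := by
      intro k
      have hterm : ∀ a ∈ range N, G a k * (starRingEnd ℂ) (G a k)
          = ∑ t' : Fin d, ∑ t : Fin d, (ζ^(a*(t':ℕ)) * ξ^(a*(t:ℕ))) * (yc t' k * yc t k) := by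
        intro a _
        rw [hconjG]
        simp only [hGdef]
        rw [mul_comm, Finset.sum_mul_sum]
        exact Finset.sum_congr rfl fun x _ => Finset.sum_congr rfl fun x' _ => by ring
      rw [Finset.sum_congr rfl hterm, Finset.sum_comm]
      have e1 : ∀ t' : Fin d, (t' ∈ Finset.univ) → ∑ a ∈ range N, ∑ t : Fin d,
          (ζ^(a*(t':ℕ)) * ξ^(a*(t:ℕ))) * (yc t' k * yc t k)
          = ∑ t : Fin d, (if (t':ℕ) = (t:ℕ) then (N:ℂ) else 0) * (yc t' k * yc t k) := by
        intro t' _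
        rw [Finset.sum_comm]
        refine Finset.sum_congr rfl fun t _ => ?_
        rw [← Finset.sum_mul, ortho (t':ℕ) (t:ℕ) t'.isLt t.isLt]
      rw [Finset.sum_congr rfl e1, Finset.mul_sum]
      refine Finset.sum_congr rfl fun t _ => ?_
      rw [Finset.sum_eq_single t]
      · rw [if_pos rfl]
      · intro b _ hb
        rw [if_neg (fun hc => hb (Fin.val_injective hc).symm), zero_mul]
      · intro ht
        exact absurd (Finset.mem_univ t) ht
    have PF : ∑ a ∈ range N, Sf a = N * ∑ s : Fin d, ∑ k, (U (r s) k)^2 := by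
      have hC : ((∑ a ∈ range N, Sf a : ℝ) : ℂ) = (((N:ℝ) * ∑ s : Fin d, ∑ k, (U (r s) k)^2 : ℝ) : ℂ) := by
        push_cast
        simp only [hSfdef]
        push_cast
        calc ∑ a ∈ range N, ∑ k : Fin τ, ((‖F a k‖ : ℝ):ℂ)^2
            = ∑ a ∈ range N, ∑ k : Fin τ, F a k * (starRingEnd ℂ) (F a k) := by
              refine Finset.sum_congr rfl fun a _ => Finset.sum_congr rfl fun k _ => ?_
              rw [← Complex.ofReal_pow, Complex.sq_norm, Complex.mul_conj]
          _ = ∑ k : Fin τ, ∑ a ∈ range N, F a k * (starRingEnd ℂ) (F a k) := Finset.sum_comm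
          _ = ∑ k : Fin τ, (N:ℂ) * ∑ s : Fin d, uc s k * uc s k :=
              Finset.sum_congr rfl fun k _ => CF k
          _ = (N:ℂ) * ∑ s : Fin d, ∑ k : Fin τ, ((U (r s) k : ℝ):ℂ)^2 := by
              rw [← Finset.mul_sum, Finset.sum_comm]
              congr 1
              refine Finset.sum_congr rfl fun s _ => Finset.sum_congr rfl fun k _ => ?_
              simp only [hucdef]
              rw [sq]
      exact_mod_cast hC
    have PG : ∑ a ∈ range N, Sg a = N * ∑ t : Fin d, ∑ k, (V k (c t))^2 := by
      have hC : ((∑ a ∈ range N, Sg a : ℝ) : ℂ) = (((N:ℝ) * ∑ t : Fin d, ∑ k, (V k (c t))^2 : ℝ) : ℂ) := by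
        push_cast
        simp only [hSgdef]
        push_cast
        calc ∑ a ∈ range N, ∑ k : Fin τ, ((‖G a k‖ : ℝ):ℂ)^2
            = ∑ a ∈ range N, ∑ k : Fin τ, G a k * (starRingEnd ℂ) (G a k) := by
              refine Finset.sum_congr rfl fun a _ => Finset.sum_congr rfl fun k _ => ?_
              rw [← Complex.ofReal_pow, Complex.sq_norm, Complex.mul_conj]
          _ = ∑ k : Fin τ, ∑ a ∈ range N, G a k * (starRingEnd ℂ) (G a k) := Finset.sum_comm
          _ = ∑ k : Fin τ, (N:ℂ) * ∑ t : Fin d, yc t k * yc t k :=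
              Finset.sum_congr rfl fun k _ => CG k
          _ = (N:ℂ) * ∑ t : Fin d, ∑ k : Fin τ, ((V k (c t) : ℝ):ℂ)^2 := by
              rw [← Finset.mul_sum, Finset.sum_comm]
              congr 1
              refine Finset.sum_congr rfl fun t _ => Finset.sum_congr rfl fun k _ => ?_
              simp only [hycdef]
              rw [sq]
      exact_mod_cast hC
    have hX : ∑ s : Fin d, ∑ k, (U (r s) k)^2 ≤ (d:ℝ) := by
      calc ∑ s : Fin d, ∑ k, (U (r s) k)^2 ≤ ∑ _s : Fin d, (1:ℝ) :=
            Finset.sum_le_sum fun s _ => hU (r s)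
        _ = d := by simp
    have hY : ∑ t : Fin d, ∑ k, (V k (c t))^2 ≤ (d:ℝ)*lam^2 := by
      calc ∑ t : Fin d, ∑ k, (V k (c t))^2 ≤ ∑ _t : Fin d, lam^2 :=
            Finset.sum_le_sum fun t _ => hV (c t)
        _ = d*lam^2 := by simp [mul_comm]
    have hNd0 : (0:ℝ) ≤ (N:ℝ)*(d:ℝ) := by positivity
    calc SS.re ≤ ‖SS‖ := Complex.re_le_norm SS
      _ ≤ ∑ a ∈ range N, ‖g a * ∑ k, F a k * G a k‖ := by
          rw [hSSdef]; exact norm_sum_le _ _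
      _ ≤ ∑ a ∈ range N, Real.sqrt (Sf a) * Real.sqrt (Sg a) := Finset.sum_le_sum habs1
      _ ≤ Real.sqrt (∑ a ∈ range N, Sf a) * Real.sqrt (∑ a ∈ range N, Sg a) := hcs2
      _ ≤ Real.sqrt ((N:ℝ)*(d:ℝ)) * Real.sqrt ((N:ℝ)*((d:ℝ)*lam^2)) := by
          apply mul_le_mul
          · apply Real.sqrt_le_sqrt
            rw [PF]
            exact mul_le_mul_of_nonneg_left hX (by positivity)
          · apply Real.sqrt_le_sqrt
            rw [PG]
            exact mul_le_mul_of_nonneg_left hY (by positivity)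
          · exact Real.sqrt_nonneg _
          · exact Real.sqrt_nonneg _
      _ = 2 * (d:ℝ)^2 * lam := by
          rw [show (N:ℝ)*((d:ℝ)*lam^2) = ((N:ℝ)*(d:ℝ))*lam^2 by ring]
          rw [Real.sqrt_mul hNd0, Real.sqrt_sq hlam]
          rw [← mul_assoc, Real.mul_self_sqrt hNd0, hNR2]
          ring
  -- conclusion
  have hd2 : (0:ℝ) < (d:ℝ)^2 := by positivity
  have hlog : Real.log (K+1) ≤ (2*Real.pi/3) * (2*lam + 1/4) := by
    have h := hlower.trans hupper
    have h2 : (3/(2*Real.pi) * Real.log ((K:ℝ)+1)) * (d:ℝ)^2 ≤ (2*lam + 1/4) * (d:ℝ)^2 := by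
      ring_nf
      ring_nf at h
      linarith
    have h3 := le_of_mul_le_mul_right h2 hd2
    have h4 : Real.log ((K:ℝ)+1) = (2*Real.pi/3) * (3/(2*Real.pi) * Real.log ((K:ℝ)+1)) := by
      field_simp
    rw [h4]
    exact mul_le_mul_of_nonneg_left h3 (by positivity)
  have hdK : (d:ℝ) ≤ 4*((K:ℝ)+1) := by
    have : d ≤ 4*(K+1) := by omega
    exact_mod_cast this
  have hKexp : ((K:ℝ)+1) ≤ Real.exp ((2*Real.pi/3) * (2*lam + 1/4)) := by
    rw [← Real.log_le_iff_le_exp (by positivity)]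
    exact_mod_cast hlog
  have hfin : (2*Real.pi/3) * (2*lam + 1/4) ≤ 2*Real.pi*lam + 7 := by
    nlinarith [Real.pi_le_four, hπ, hlam]
  calc (d:ℝ) ≤ 4*((K:ℝ)+1) := hdK
    _ ≤ 4 * Real.exp ((2*Real.pi/3) * (2*lam + 1/4)) := by linarith
    _ ≤ 7 * Real.exp (2*Real.pi*lam + 7) := by
        have := Real.exp_le_exp.mpr hfin
        nlinarith [Real.exp_pos ((2*Real.pi/3) * (2*lam + 1/4))]
end

section
/- Let S = {0,1,…,n−1} ⊆ ℤ/(2n). Then the Fourier algebra norm Σ_{a ∈ ℤ/(2n)} |𝟙̂_S(a)| is at least (1/(2π)) ln n − O(1). -/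
open scoped BigOperators

lemma aux_abs_exp_sub_one (θ : ℝ) :
    ‖Complex.exp (θ * Complex.I) - 1‖ = 2 * |Real.sin (θ / 2)| := by
  have h : Complex.exp (θ * Complex.I) - 1
      = ((Real.cos θ - 1 : ℝ) : ℂ) + ((Real.sin θ : ℝ) : ℂ) * Complex.I := by
    rw [Complex.exp_mul_I, ← Complex.ofReal_cos, ← Complex.ofReal_sin]
    push_cast; ring
  rw [h, Complex.norm_add_mul_I]
  have h2 : (Real.cos θ - 1) ^ 2 + Real.sin θ ^ 2 = (2 * Real.sin (θ / 2)) ^ 2 := by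
    have h3 := Real.sin_sq_add_cos_sq θ
    have h4 : Real.cos θ = 1 - 2 * Real.sin (θ / 2) ^ 2 := by
      have h6 := Real.cos_two_mul (θ / 2)
      have h5 := Real.sin_sq_add_cos_sq (θ / 2)
      rw [show 2 * (θ / 2) = θ by ring] at h6
      nlinarith
    nlinarith
  rw [h2, Real.sqrt_sq_eq_abs, abs_mul]
  norm_num

/-- For `S = {0,…,n−1} ⊆ ℤ/2n`, the Fourier algebra norm
`Σ_{a ∈ ℤ/2n} |𝟙̂_S(a)|` is at least `(1/(2π)) ln n − O(1)`. -/
theorem fourier_algebra_norm_lower : ∃ C : ℝ, ∀ n : ℕ, 1 ≤ n →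
    (1 / (2 * Real.pi)) * Real.log n - C ≤
      ∑ a ∈ Finset.range (2 * n),
        ‖(1 / (2 * n) : ℂ) *
          ∑ x ∈ Finset.range n,
            Complex.exp (-(2 * Real.pi * Complex.I * a * x) / (2 * n))‖ := by
  refine ⟨0, fun n hn => ?_⟩
  have hn0 : (n : ℝ) ≠ 0 := Nat.cast_ne_zero.mpr (by omega)
  have hnC : (n : ℂ) ≠ 0 := Nat.cast_ne_zero.mpr (by omega)
  have hπ := Real.pi_pos
  set f : ℕ → ℝ := fun a =>
      ‖(1 / (2 * n) : ℂ) *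
        ∑ x ∈ Finset.range n,
          Complex.exp (-(2 * Real.pi * Complex.I * a * x) / (2 * n))‖ with hf
  -- Step 1: lower bound each odd term by 1/(π a)
  have key : ∀ a ∈ (Finset.range (2 * n)).filter (fun a => Odd a),
      1 / (Real.pi * a) ≤ f a := by
    intro a ha
    rw [Finset.mem_filter, Finset.mem_range] at ha
    obtain ⟨halt, hodd⟩ := ha
    have ha1 : 1 ≤ a := hodd.pos
    have haR : (0 : ℝ) < a := by exact_mod_cast ha1
    set θ : ℝ := -(Real.pi * a / n) with hθ
    have hsum : ∀ x ∈ Finset.range n,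
        Complex.exp (-(2 * Real.pi * Complex.I * a * x) / (2 * n))
          = (Complex.exp ((θ : ℂ) * Complex.I)) ^ x := by
      intro x _
      rw [← Complex.exp_nat_mul]
      congr 1
      rw [hθ]
      push_cast
      field_simp
    rw [hf]
    simp only [Finset.sum_congr rfl hsum]
    -- the angle: 0 < π a/(2n) < π, so sin > 0
    have hhalf : θ / 2 = -(Real.pi * a / (2 * n)) := by rw [hθ]; ring
    have hpos : 0 < Real.pi * a / (2 * n) := by positivity
    have hlt : Real.pi * a / (2 * n) < Real.pi := by
      rw [div_lt_iff₀ (by positivity)]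
      have : (a : ℝ) < 2 * n := by exact_mod_cast halt
      nlinarith
    have hsin : 0 < Real.sin (Real.pi * a / (2 * n)) :=
      Real.sin_pos_of_pos_of_lt_pi hpos hlt
    have habs : ‖Complex.exp ((θ : ℂ) * Complex.I) - 1‖
        = 2 * Real.sin (Real.pi * a / (2 * n)) := by
      rw [aux_abs_exp_sub_one, hhalf, Real.sin_neg, abs_neg,
        abs_of_pos hsin]
    have hne : Complex.exp ((θ : ℂ) * Complex.I) ≠ 1 := by
      intro h
      rw [h] at habs
      simp at habs
      nlinarith
    have hpow : (Complex.exp ((θ : ℂ) * Complex.I)) ^ n = -1 := by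
      rw [← Complex.exp_nat_mul]
      have : (n : ℂ) * ((θ : ℂ) * Complex.I) = -((a : ℂ) * (Real.pi * Complex.I)) := by
        rw [hθ]; push_cast; field_simp
      rw [this, Complex.exp_neg, Complex.exp_nat_mul]
      norm_num [Complex.exp_pi_mul_I, hodd.neg_one_pow]
    rw [geom_sum_eq hne, hpow]
    have h21 : ((-1 : ℂ) - 1) = -2 := by norm_num
    rw [h21]
    have hval : ‖(1 / (2 * (n:ℂ))) *
        ((-2 : ℂ) / (Complex.exp ((θ:ℂ) * Complex.I) - 1))‖
        = (1 / (2 * (n:ℝ))) * (2 / (2 * Real.sin (Real.pi * a / (2 * n)))) := by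
      rw [norm_mul, norm_div, norm_div, habs, norm_one]
      have e2 : ‖(-2 : ℂ)‖ = 2 := by
        rw [norm_neg]; norm_num
      have e3 : ‖2 * (n:ℂ)‖ = 2 * n := by
        rw [norm_mul, Complex.norm_natCast]; norm_num
      rw [e2, e3]
    rw [hval]
    have hsinle : Real.sin (Real.pi * a / (2 * n)) ≤ Real.pi * a / (2 * n) :=
      Real.sin_le hpos.le
    have hr : (1 / (2 * (n:ℝ))) * (2 / (2 * Real.sin (Real.pi * a / (2 * n))))
        = 1 / (2 * n * Real.sin (Real.pi * a / (2 * n))) := by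
      field_simp
    rw [hr]
    have h7 : 2 * (n:ℝ) * Real.sin (Real.pi * a / (2 * n)) ≤ Real.pi * a := by
      have h8 := mul_le_mul_of_nonneg_left hsinle (by positivity : (0:ℝ) ≤ 2 * n)
      have h9 : 2 * (n:ℝ) * (Real.pi * a / (2 * n)) = Real.pi * a := by field_simp
      linarith
    exact one_div_le_one_div_of_le (by positivity) h7
  -- Step 2: total sum ≥ sum over odd terms
  have step2 : ∑ a ∈ (Finset.range (2 * n)).filter (fun a => Odd a), f a
      ≤ ∑ a ∈ Finset.range (2 * n), f a :=
    Finset.sum_le_sum_of_subset_of_nonneg (Finset.filter_subset _ _)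
      (fun a _ _ => norm_nonneg _)
  -- Step 3: sum over odd a of 1/(π a) = Σ_{k<n} 1/(π(2k+1))
  have step3 : ∑ a ∈ (Finset.range (2 * n)).filter (fun a => Odd a), 1 / (Real.pi * a)
      = ∑ k ∈ Finset.range n, 1 / (Real.pi * (2 * k + 1)) := by
    rw [Finset.sum_nbij' (i := fun a => (a - 1) / 2) (j := fun k => 2 * k + 1)]
    · intro a ha
      rw [Finset.mem_filter, Finset.mem_range] at ha
      obtain ⟨h1, k, hk⟩ := ha
      rw [Finset.mem_range]; omega
    · intro k hk
      rw [Finset.mem_range] at hk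
      rw [Finset.mem_filter, Finset.mem_range]
      exact ⟨by omega, k, by omega⟩
    · intro a ha
      rw [Finset.mem_filter] at ha
      obtain ⟨_, k, hk⟩ := ha
      omega
    · intro k _; omega
    · intro a ha
      rw [Finset.mem_filter] at ha
      obtain ⟨_, k, hk⟩ := ha
      congr 2
      push_cast
      have : a = 2 * ((a - 1) / 2) + 1 := by omega
      exact_mod_cast this
  -- Step 4: harmonic bound
  have step4 : (1 / (2 * Real.pi)) * Real.log n
      ≤ ∑ k ∈ Finset.range n, 1 / (Real.pi * (2 * k + 1)) := by
    have hh : ∀ k ∈ Finset.range n,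
        (1 / (2 * Real.pi)) * (1 / (k + 1)) ≤ 1 / (Real.pi * (2 * k + 1)) := by
      intro k _
      rw [div_mul_div_comm, one_mul, div_le_div_iff₀ (by positivity) (by positivity)]
      have : (0:ℝ) ≤ k := Nat.cast_nonneg k
      nlinarith
    calc (1 / (2 * Real.pi)) * Real.log n
        ≤ (1 / (2 * Real.pi)) * Real.log (n + 1) := by
          apply mul_le_mul_of_nonneg_left _ (by positivity)
          apply Real.log_le_log (by exact_mod_cast Nat.pos_of_ne_zero (by omega))
          linarith [Nat.cast_nonneg (α := ℝ) n]
      _ ≤ (1 / (2 * Real.pi)) * (harmonic n : ℝ) := by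
          apply mul_le_mul_of_nonneg_left _ (by positivity)
          have := log_add_one_le_harmonic n
          push_cast at this ⊢
          convert this using 2
      _ = ∑ k ∈ Finset.range n, (1 / (2 * Real.pi)) * (1 / (k + 1)) := by
          rw [← Finset.mul_sum]
          congr 1
          rw [harmonic_eq_sum_Icc]
          push_cast
          rw [show Finset.Icc 1 n = Finset.Ico 1 (n + 1) by rw [Finset.Ico_add_one_right_eq_Icc],
            Finset.sum_Ico_eq_sum_range]
          simp [one_div, add_comm]
      _ ≤ _ := Finset.sum_le_sum hh
  calc (1 / (2 * Real.pi)) * Real.log n - 0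
      = (1 / (2 * Real.pi)) * Real.log n := by ring
    _ ≤ ∑ k ∈ Finset.range n, 1 / (Real.pi * (2 * k + 1)) := step4
    _ = ∑ a ∈ (Finset.range (2 * n)).filter (fun a => Odd a), 1 / (Real.pi * a) :=
        step3.symm
    _ ≤ ∑ a ∈ (Finset.range (2 * n)).filter (fun a => Odd a), f a :=
        Finset.sum_le_sum key
    _ ≤ _ := step2
end

section
/- Let B be an m×n blocky matrix with F ones, supported on rectangles S_1×T_1,…,S_k×T_k with the S_i pairwise disjoint in [m] and the T_i pairwise disjoint in [n]. Then there exists an index i with |S_i| ≥ F/(2n) and |T_i| ≥ F/(2m). -/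
open scoped BigOperators Matrix Classical

/-- In a blocky matrix with `F > 0` ones supported on the rectangles `S_i × T_i`,
some rectangle has `|S_i| ≥ F/(2n)` and `|T_i| ≥ F/(2m)`. -/
theorem blocky_large_rectangle (m n k : ℕ)
    (B : Matrix (Fin m) (Fin n) ℝ)
    (S : Fin k → Finset (Fin m)) (T : Fin k → Finset (Fin n))
    (hS : ∀ a b, a ≠ b → Disjoint (S a) (S b))
    (hT : ∀ a b, a ≠ b → Disjoint (T a) (T b))
    (hbool : ∀ i j, B i j = 0 ∨ B i j = 1)
    (hsupp : ∀ i j, B i j = 1 ↔ ∃ t, i ∈ S t ∧ j ∈ T t)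
    (F : ℕ) (hF : F = ∑ t, (S t).card * (T t).card) (hFpos : 0 < F) :
    ∃ i : Fin k, (F : ℝ) / (2 * n) ≤ ((S i).card : ℝ) ∧
      (F : ℝ) / (2 * m) ≤ ((T i).card : ℝ) := by
  classical
  by_contra hcon
  push_neg at hcon
  -- positivity of m and n
  have hn : 0 < n := by
    rcases Nat.eq_zero_or_pos n with rfl | h
    · have hz : ∀ t, (T t).card = 0 := fun t => by
        simp [Finset.card_eq_zero, Finset.eq_empty_of_isEmpty]
      simp [hz] at hF; omega
    · exact h
  have hm : 0 < m := by
    rcases Nat.eq_zero_or_pos m with rfl | h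
    · have hz : ∀ t, (S t).card = 0 := fun t => by
        simp [Finset.card_eq_zero, Finset.eq_empty_of_isEmpty]
      simp [hz] at hF; omega
    · exact h
  have hnR : (0:ℝ) < n := by exact_mod_cast hn
  have hmR : (0:ℝ) < m := by exact_mod_cast hm
  have hFR : (0:ℝ) < F := by exact_mod_cast hFpos
  -- sums of cards are bounded by the ambient size
  have hsumT : ∀ (A' : Finset (Fin k)), (∑ t ∈ A', ((T t).card : ℝ)) ≤ n := by
    intro A'
    have h1 : ∑ t ∈ A', (T t).card = (A'.biUnion T).card :=
      (Finset.card_biUnion (fun a _ b _ hab => hT a b hab)).symm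
    have h2 : (A'.biUnion T).card ≤ n := by
      simpa using Finset.card_le_univ (A'.biUnion T)
    have : (∑ t ∈ A', (T t).card : ℕ) ≤ n := h1 ▸ h2
    calc (∑ t ∈ A', ((T t).card : ℝ)) = ((∑ t ∈ A', (T t).card : ℕ) : ℝ) := by
          push_cast; ring
      _ ≤ n := by exact_mod_cast this
  have hsumS : ∀ (A' : Finset (Fin k)), (∑ t ∈ A', ((S t).card : ℝ)) ≤ m := by
    intro A'
    have h1 : ∑ t ∈ A', (S t).card = (A'.biUnion S).card :=
      (Finset.card_biUnion (fun a _ b _ hab => hS a b hab)).symm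
    have h2 : (A'.biUnion S).card ≤ m := by
      simpa using Finset.card_le_univ (A'.biUnion S)
    have : (∑ t ∈ A', (S t).card : ℕ) ≤ m := h1 ▸ h2
    calc (∑ t ∈ A', ((S t).card : ℝ)) = ((∑ t ∈ A', (S t).card : ℕ) : ℝ) := by
          push_cast; ring
      _ ≤ m := by exact_mod_cast this
  -- the set of indices where S is small
  set A : Finset (Fin k) := Finset.univ.filter
      (fun t => ((S t).card : ℝ) < (F:ℝ)/(2*n)) with hA
  have hmemA : ∀ t ∈ A, ((S t).card : ℝ) < (F:ℝ)/(2*n) := by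
    intro t ht; exact (Finset.mem_filter.mp ht).2
  have hmemAc : ∀ t ∈ Aᶜ, ((T t).card : ℝ) < (F:ℝ)/(2*m) := by
    intro t ht
    have : ¬ ((S t).card : ℝ) < (F:ℝ)/(2*n) := by
      intro h
      exact (Finset.mem_compl.mp ht) (Finset.mem_filter.mpr ⟨Finset.mem_univ t, h⟩)
    exact hcon t (le_of_not_gt this)
  have hFsum : (F:ℝ) = ∑ t, ((S t).card : ℝ) * ((T t).card : ℝ) := by
    rw [hF]; push_cast; ring
  have hsplit : (F:ℝ) = (∑ t ∈ A, ((S t).card : ℝ) * ((T t).card : ℝ))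
      + ∑ t ∈ Aᶜ, ((S t).card : ℝ) * ((T t).card : ℝ) := by
    rw [hFsum, Finset.sum_add_sum_compl]
  -- nonstrict bounds on both halves
  have hAle : (∑ t ∈ A, ((S t).card : ℝ) * ((T t).card : ℝ)) ≤ (F:ℝ)/2 := by
    calc (∑ t ∈ A, ((S t).card : ℝ) * ((T t).card : ℝ))
        ≤ ∑ t ∈ A, ((F:ℝ)/(2*n)) * ((T t).card : ℝ) := by
          apply Finset.sum_le_sum
          intro t ht
          exact mul_le_mul_of_nonneg_right (le_of_lt (hmemA t ht)) (Nat.cast_nonneg _)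
      _ = ((F:ℝ)/(2*n)) * ∑ t ∈ A, ((T t).card : ℝ) := by
          rw [Finset.mul_sum]
      _ ≤ ((F:ℝ)/(2*n)) * n := by
          exact mul_le_mul_of_nonneg_left (hsumT A) (by positivity)
      _ = (F:ℝ)/2 := by field_simp
  have hAcle : (∑ t ∈ Aᶜ, ((S t).card : ℝ) * ((T t).card : ℝ)) ≤ (F:ℝ)/2 := by
    calc (∑ t ∈ Aᶜ, ((S t).card : ℝ) * ((T t).card : ℝ))
        ≤ ∑ t ∈ Aᶜ, ((S t).card : ℝ) * ((F:ℝ)/(2*m)) := by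
          apply Finset.sum_le_sum
          intro t ht
          exact mul_le_mul_of_nonneg_left (le_of_lt (hmemAc t ht)) (Nat.cast_nonneg _)
      _ = (∑ t ∈ Aᶜ, ((S t).card : ℝ)) * ((F:ℝ)/(2*m)) := by
          rw [Finset.sum_mul]
      _ ≤ (m:ℝ) * ((F:ℝ)/(2*m)) := by
          exact mul_le_mul_of_nonneg_right (hsumS Aᶜ) (by positivity)
      _ = (F:ℝ)/2 := by field_simp
  -- a witness with a positive term
  have ht0 : ∃ t0 : Fin k, 0 < (S t0).card * (T t0).card := by
    by_contra h
    push_neg at h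
    have : F = 0 := by
      rw [hF]; exact Finset.sum_eq_zero (fun t _ => Nat.le_zero.mp (h t))
    omega
  obtain ⟨t0, ht0⟩ := ht0
  have hS0 : (0:ℝ) < ((S t0).card : ℝ) := by
    have : 0 < (S t0).card := by
      rcases Nat.eq_zero_or_pos (S t0).card with h | h
      · rw [h] at ht0; simp at ht0
      · exact h
    exact_mod_cast this
  have hT0 : (0:ℝ) < ((T t0).card : ℝ) := by
    have : 0 < (T t0).card := by
      rcases Nat.eq_zero_or_pos (T t0).card with h | h
      · rw [h] at ht0; simp at ht0
      · exact h
    exact_mod_cast this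
  by_cases hc : t0 ∈ A
  · -- strict bound on the A half
    have hAlt : (∑ t ∈ A, ((S t).card : ℝ) * ((T t).card : ℝ)) < (F:ℝ)/2 := by
      calc (∑ t ∈ A, ((S t).card : ℝ) * ((T t).card : ℝ))
          < ∑ t ∈ A, ((F:ℝ)/(2*n)) * ((T t).card : ℝ) := by
            apply Finset.sum_lt_sum
            · intro t ht
              exact mul_le_mul_of_nonneg_right (le_of_lt (hmemA t ht)) (Nat.cast_nonneg _)
            · exact ⟨t0, hc, mul_lt_mul_of_pos_right (hmemA t0 hc) hT0⟩
        _ = ((F:ℝ)/(2*n)) * ∑ t ∈ A, ((T t).card : ℝ) := by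
            rw [Finset.mul_sum]
        _ ≤ ((F:ℝ)/(2*n)) * n := by
            exact mul_le_mul_of_nonneg_left (hsumT A) (by positivity)
        _ = (F:ℝ)/2 := by field_simp
    linarith [hsplit, hAcle]
  · have hc' : t0 ∈ Aᶜ := Finset.mem_compl.mpr hc
    have hAclt : (∑ t ∈ Aᶜ, ((S t).card : ℝ) * ((T t).card : ℝ)) < (F:ℝ)/2 := by
      calc (∑ t ∈ Aᶜ, ((S t).card : ℝ) * ((T t).card : ℝ))
          < ∑ t ∈ Aᶜ, ((S t).card : ℝ) * ((F:ℝ)/(2*m)) := by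
            apply Finset.sum_lt_sum
            · intro t ht
              exact mul_le_mul_of_nonneg_left (le_of_lt (hmemAc t ht)) (Nat.cast_nonneg _)
            · exact ⟨t0, hc', mul_lt_mul_of_pos_left (hmemAc t0 hc') hS0⟩
        _ = (∑ t ∈ Aᶜ, ((S t).card : ℝ)) * ((F:ℝ)/(2*m)) := by
            rw [Finset.sum_mul]
        _ ≤ (m:ℝ) * ((F:ℝ)/(2*m)) := by
            exact mul_le_mul_of_nonneg_right (hsumS Aᶜ) (by positivity)
        _ = (F:ℝ)/2 := by field_simp
    linarith [hsplit, hAle]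
end

section
/- Let A be an m×n boolean matrix with γ₂(A) ≤ λ, λ ≥ 1, and let d ≥ 2. Suppose TD(A) ≤ d, and suppose i ∈ [m] is a row such that, for j = argmin_{t ∈ R_i} |C_t ∩ Δ_i|, the set (C_j ∩ Δ_i) × R_i contains at most half of the 1-entries of A restricted to Δ_i × R_i. Then with S = Δ_i \ C_j: the submatrix A_{S×R_i} contains at least half of the 1-entries of A_{Δ_i×R_i}, and TD(A_{S×R_i}) ≤ d−1. -/
open scoped BigOperators Matrix Classical

/-- Threshold-dimension decrement: if `A` is boolean with a `λ`-factorization,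
`TD(A) ≤ d` (`d ≥ 2`), `j` is the column in `R_i` minimizing `|C_j ∩ Δ_i|`, and
`(C_j ∩ Δ_i) × R_i` carries at most half the 1-entries of `A_{Δ_i × R_i}`,
then with `S = Δ_i \ C_j` the submatrix `A_{S × R_i}` contains at least half of the
1-entries of `A_{Δ_i × R_i}` and has threshold dimension at most `d − 1`. -/
theorem td_decrement (m n t : ℕ) (lam : ℝ) (hlam : 1 ≤ lam) (d : ℕ) (hd : 2 ≤ d)
    (A : Matrix (Fin m) (Fin n) ℝ)
    (U : Matrix (Fin m) (Fin t) ℝ) (V : Matrix (Fin t) (Fin n) ℝ)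
    (hbool : ∀ i j, A i j = 0 ∨ A i j = 1)
    (hfac : A = U * V)
    (hU : ∀ i, ∑ k, (U i k) ^ 2 ≤ 1)
    (hV : ∀ j, ∑ k, (V k j) ^ 2 ≤ lam ^ 2)
    -- TD(A) ≤ d : no threshold pattern of size d+1
    (hTD : ¬ ∃ (r : Fin (d + 1) → Fin m) (c : Fin (d + 1) → Fin n),
      ∀ s t', A (r s) (c t') = 1 ↔ t' ≤ s)
    (i : Fin m)
    (R : Finset (Fin n)) (hR : R = Finset.univ.filter (fun j => A i j = 1))
    (Δ : Finset (Fin m))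
    (hΔ : Δ = Finset.univ.filter (fun s => 1 / (2 * lam ^ 2) ≤ (∑ k, U i k * U s k) ^ 2))
    (j : Fin n) (hjR : j ∈ R)
    (Cj : Finset (Fin m)) (hCj : Cj = Finset.univ.filter (fun s => A s j = 1))
    (hargmin : ∀ t' ∈ R,
      (Cj ∩ Δ).card ≤ (Finset.univ.filter (fun s => A s t' = 1) ∩ Δ).card)
    (hhalf : 2 * ((((Cj ∩ Δ) ×ˢ R).filter (fun p : Fin m × Fin n => A p.1 p.2 = 1)).card) ≤
      ((Δ ×ˢ R).filter (fun p : Fin m × Fin n => A p.1 p.2 = 1)).card) :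
    (((Δ ×ˢ R).filter (fun p : Fin m × Fin n => A p.1 p.2 = 1)).card ≤
        2 * ((((Δ \ Cj) ×ˢ R).filter (fun p : Fin m × Fin n => A p.1 p.2 = 1)).card)) ∧
      ¬ ∃ (r : Fin d → Fin m) (c : Fin d → Fin n),
        (∀ s, r s ∈ Δ \ Cj) ∧ (∀ t', c t' ∈ R) ∧
        ∀ s t', A (r s) (c t') = 1 ↔ t' ≤ s := by
  constructor
  · -- counting part
    have hdis : Disjoint (((Cj ∩ Δ) ×ˢ R).filter (fun p : Fin m × Fin n => A p.1 p.2 = 1))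
        ((((Δ \ Cj) ×ˢ R)).filter (fun p : Fin m × Fin n => A p.1 p.2 = 1)) := by
      rw [Finset.disjoint_left]
      intro p hp hq
      simp only [Finset.mem_filter, Finset.mem_product, Finset.mem_inter, Finset.mem_sdiff] at hp hq
      exact hq.1.1.2 hp.1.1.1
    have hunion : (Cj ∩ Δ) ∪ (Δ \ Cj) = Δ := by
      ext x; simp only [Finset.mem_union, Finset.mem_inter, Finset.mem_sdiff]; tauto
    have hsplit : ((Δ ×ˢ R).filter (fun p : Fin m × Fin n => A p.1 p.2 = 1)).card =
        (((Cj ∩ Δ) ×ˢ R).filter (fun p : Fin m × Fin n => A p.1 p.2 = 1)).card +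
        (((Δ \ Cj) ×ˢ R).filter (fun p : Fin m × Fin n => A p.1 p.2 = 1)).card := by
      rw [← Finset.card_union_of_disjoint hdis, ← Finset.filter_union, ← Finset.union_product,
        hunion]
    omega
  · rintro ⟨r, c, hrS, hcR, hpat⟩
    apply hTD
    refine ⟨fun s => if h : (s : ℕ) < d then r ⟨s, h⟩ else i,
            fun t' => if h : (t' : ℕ) < d then c ⟨t', h⟩ else j, ?_⟩
    intro s t'
    by_cases hs : (s : ℕ) < d <;> by_cases ht : (t' : ℕ) < d <;>
      simp only [hs, ht, dif_pos, dif_neg, not_false_iff]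
    · rw [hpat]
      constructor
      · intro h
        exact Fin.mk_le_mk.mp h
      · intro h
        exact Fin.mk_le_mk.mp h
    · -- t' = d, s < d : column j, row r s ∉ Cj
      have hnot : ¬ A (r ⟨s, hs⟩) j = 1 := by
        have := (hrS ⟨s, hs⟩)
        rw [Finset.mem_sdiff, hCj] at this
        simpa using this.2
      simp only [hnot, false_iff]
      intro h
      have : (t' : ℕ) ≤ (s : ℕ) := h
      omega
    · -- s = d, t' < d : row i, column c t' ∈ R
      have : A i (c ⟨t', ht⟩) = 1 := by
        have := hcR ⟨t', ht⟩
        rw [hR] at this; simpa using this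
      simp only [this, true_iff]
      have hsd : (s : ℕ) = d := by omega
      exact Fin.le_def.mpr (by omega)
    · -- s = d, t' = d
      have hij : A i j = 1 := by rw [hR] at hjR; simpa using hjR
      simp only [hij, true_iff]
      exact Fin.le_def.mpr (by omega)
end

section
/- Let A be an m×n boolean matrix with γ₂(A) ≤ λ, and let A = UV be a λ-factorization minimizing Π = Σ_s ‖u_s‖₂²|R_s|. Suppose i ∈ [m] is a row with R_i ≠ ∅ and ‖A_{Δ_i×[n]}‖_F² ≥ 4λ²‖A_{[m]×R_i}‖_F², where Δ_i = { s : |⟨u_i,u_s⟩|² ≥ 1/(2λ²) }. Then the submatrix A' = A_{[m]×R_i^c} obtained by deleting the columns in R_i satisfies Π_λ(A) − Π_λ(A') ≥ 2(‖A‖_F² − ‖A'‖_F²), where Π_λ(M) denotes the minimum of Σ_s ‖u'_s‖₂²|R_s(M)| over all λ-factorizations M = U'V'. -/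
open scoped BigOperators Matrix Classical

lemma card_filter_subtype' {n : ℕ} (S : Finset (Fin n)) (P : Fin n → Prop) [DecidablePred P] :
    (Finset.univ.filter (fun j : ↥S => P (j : Fin n))).card = (S.filter P).card := by
  apply Finset.card_bij (fun (a : ↥S) _ => (a : Fin n))
  · intro a ha
    simp only [Finset.mem_filter, Finset.mem_univ, true_and] at ha
    exact Finset.mem_filter.mpr ⟨a.2, ha⟩
  · intro a _ b _ h; exact Subtype.ext h
  · intro b hb
    simp only [Finset.mem_filter] at hb
    exact ⟨⟨b, hb.1⟩, by simp [hb.2], rfl⟩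

lemma card_filter_product' {m n : ℕ} (u : Finset (Fin m)) (r : Finset (Fin n))
    (P : Fin m → Fin n → Prop) [∀ a b, Decidable (P a b)] :
    ((u ×ˢ r).filter (fun p : Fin m × Fin n => P p.1 p.2)).card
      = ∑ s ∈ u, (r.filter (fun j => P s j)).card := by
  rw [Finset.card_filter, Finset.sum_product]
  exact Finset.sum_congr rfl fun s _ => (Finset.card_filter _ _).symm

/-- Potential drop lemma: if `A = UV` is a `λ`-factorization minimizing the potential
`Π = Σ_s ‖u_s‖²|R_s|`, and `i` is a row with `R_i ≠ ∅` and
`‖A_{Δ_i×[n]}‖_F² ≥ 4λ²‖A_{[m]×R_i}‖_F²`, then deleting the columns in `R_i` decreases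
the potential by at least twice the number of deleted 1-entries. -/
theorem potential_drop (m n t : ℕ) (lam : ℝ) (hlam : 1 ≤ lam)
    (A : Matrix (Fin m) (Fin n) ℝ)
    (U : Matrix (Fin m) (Fin t) ℝ) (V : Matrix (Fin t) (Fin n) ℝ)
    (hbool : ∀ i j, A i j = 0 ∨ A i j = 1)
    (hfac : A = U * V)
    (hU : ∀ i, ∑ k, (U i k) ^ 2 ≤ 1)
    (hV : ∀ j, ∑ k, (V k j) ^ 2 ≤ lam ^ 2)
    (hmin : ∀ (t' : ℕ) (U' : Matrix (Fin m) (Fin t') ℝ) (V' : Matrix (Fin t') (Fin n) ℝ),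
      A = U' * V' → (∀ i, ∑ k, (U' i k) ^ 2 ≤ 1) → (∀ j, ∑ k, (V' k j) ^ 2 ≤ lam ^ 2) →
      ∑ s, (∑ k, (U s k) ^ 2) * ((Finset.univ.filter (fun j => A s j = 1)).card : ℝ) ≤
        ∑ s, (∑ k, (U' s k) ^ 2) * ((Finset.univ.filter (fun j => A s j = 1)).card : ℝ))
    (i : Fin m)
    (R : Finset (Fin n)) (hR : R = Finset.univ.filter (fun j => A i j = 1))
    (hRne : R.Nonempty)
    (Δ : Finset (Fin m))
    (hΔ : Δ = Finset.univ.filter (fun s => 1 / (2 * lam ^ 2) ≤ (∑ k, U i k * U s k) ^ 2))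
    (hbig : 4 * lam ^ 2 *
        ((((Finset.univ : Finset (Fin m)) ×ˢ R).filter
          (fun p : Fin m × Fin n => A p.1 p.2 = 1)).card : ℝ) ≤
      (((Δ ×ˢ (Finset.univ : Finset (Fin n))).filter
          (fun p : Fin m × Fin n => A p.1 p.2 = 1)).card : ℝ)) :
    -- Π_λ(A) − Π_λ(A') ≥ 2(‖A‖_F² − ‖A'‖_F²), where A' = A_{[m] × R^c} and
    -- Π_λ(A) is attained by the minimizing factorization U, V.
    (∑ s, (∑ k, (U s k) ^ 2) * ((Finset.univ.filter (fun j => A s j = 1)).card : ℝ)) -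
      sInf {x : ℝ | ∃ (t' : ℕ) (U' : Matrix (Fin m) (Fin t') ℝ)
          (V' : Matrix (Fin t') (↥(Rᶜ)) ℝ),
        (Matrix.of (fun (s : Fin m) (j : ↥(Rᶜ)) => A s (j : Fin n))) = U' * V' ∧
        (∀ s, ∑ k, (U' s k) ^ 2 ≤ 1) ∧ (∀ j, ∑ k, (V' k j) ^ 2 ≤ lam ^ 2) ∧
        x = ∑ s, (∑ k, (U' s k) ^ 2) *
          ((Finset.univ.filter (fun j : ↥(Rᶜ) => A s (j : Fin n) = 1)).card : ℝ)} ≥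
    2 * (((Finset.univ.filter (fun p : Fin m × Fin n => A p.1 p.2 = 1)).card : ℝ) -
      (((Finset.univ ×ˢ Rᶜ).filter (fun p : Fin m × Fin n => A p.1 p.2 = 1)).card : ℝ)) := by
  classical
  have hlam2 : (1:ℝ) ≤ lam ^ 2 := by nlinarith
  have hlam2pos : (0:ℝ) < lam ^ 2 := by linarith
  -- abbreviations
  set nu : Fin m → ℝ := fun s => ∑ k, (U s k) ^ 2 with hnu
  set ip : Fin m → ℝ := fun s => ∑ k, U i k * U s k with hip
  set wi : ℝ := ∑ k, (U i k) ^ 2 with hwi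
  have hA : ∀ s j, A s j = ∑ k, U s k * V k j := by
    intro s j; rw [hfac, Matrix.mul_apply]
  obtain ⟨j0, hj0⟩ := hRne
  have hj0R : A i j0 = 1 := by
    rw [hR] at hj0; exact (Finset.mem_filter.1 hj0).2
  have hwi_pos : 0 < wi := by
    rcases lt_or_ge 0 wi with h | h
    · exact h
    · exfalso
      have h0 : wi = 0 := le_antisymm h (Finset.sum_nonneg fun k _ => sq_nonneg _)
      have hz : ∀ k, U i k = 0 := by
        intro k
        have := (Finset.sum_eq_zero_iff_of_nonneg
          (fun k _ => sq_nonneg (U i k))).1 h0 k (Finset.mem_univ k)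
        exact pow_eq_zero_iff two_ne_zero |>.1 this
      have : A i j0 = 0 := by rw [hA]; simp [hz]
      rw [hj0R] at this; norm_num at this
  have hwi_le : wi ≤ 1 := hU i
  -- orthogonality: u_i ⟂ v_j for j ∉ R
  have horth : ∀ j : Fin n, j ∉ R → ∑ k, U i k * V k j = 0 := by
    intro j hj
    have hne : A i j ≠ 1 := by
      intro h1; apply hj; rw [hR]; simp [h1]
    have h0 : A i j = 0 := (hbool i j).resolve_right hne
    exact (hA i j).symm.trans h0
  -- the projected factorization of A'
  set c : Fin m → ℝ := fun s => ip s / wi with hc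
  set U' : Matrix (Fin m) (Fin t) ℝ := fun s k => U s k - c s * U i k with hU'def
  set V' : Matrix (Fin t) ↥(Rᶜ) ℝ := fun k j => V k (j : Fin n) with hV'def
  have hfac' : (Matrix.of (fun (s : Fin m) (j : ↥(Rᶜ)) => A s (j : Fin n))) = U' * V' := by
    ext s j
    have hjc : (j : Fin n) ∉ R := Finset.mem_compl.1 j.2
    have key : ∑ k, (U s k - c s * U i k) * V k (j : Fin n)
        = (∑ k, U s k * V k (j : Fin n)) - c s * ∑ k, U i k * V k (j : Fin n) := by
      rw [Finset.mul_sum, ← Finset.sum_sub_distrib]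
      exact Finset.sum_congr rfl fun k _ => by ring
    simp only [Matrix.of_apply, Matrix.mul_apply]
    simp only [hU'def, hV'def]
    rw [key, horth _ hjc, mul_zero, sub_zero, hA]
  have hnorm' : ∀ s, ∑ k, (U' s k) ^ 2 = nu s - (ip s) ^ 2 / wi := by
    intro s
    have expand : ∀ k, (U' s k) ^ 2
        = (U s k) ^ 2 - 2 * c s * (U i k * U s k) + (c s) ^ 2 * (U i k) ^ 2 := by
      intro k; simp only [hU'def]; ring
    rw [Finset.sum_congr rfl fun k _ => expand k, Finset.sum_add_distrib,
      Finset.sum_sub_distrib, ← Finset.mul_sum, ← Finset.mul_sum]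
    have hcs : c s = ip s / wi := rfl
    rw [hcs]
    field_simp
    ring
  have hU'le : ∀ s, ∑ k, (U' s k) ^ 2 ≤ 1 := by
    intro s
    rw [hnorm' s]
    have h1 : 0 ≤ (ip s) ^ 2 / wi := div_nonneg (sq_nonneg _) hwi_pos.le
    have := hU s
    simp only [hnu] at *
    linarith
  have hV'le : ∀ j : ↥(Rᶜ), ∑ k, (V' k j) ^ 2 ≤ lam ^ 2 := fun j => hV _
  -- counting abbreviations
  set a : Fin m → ℝ := fun s => ((R.filter (fun j => A s j = 1)).card : ℝ) with ha
  set b : Fin m → ℝ := fun s => ((Rᶜ.filter (fun j => A s j = 1)).card : ℝ) with hb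
  have ha0 : ∀ s, 0 ≤ a s := fun s => Nat.cast_nonneg _
  have hb0 : ∀ s, 0 ≤ b s := fun s => Nat.cast_nonneg _
  have hsplit : ∀ s, ((Finset.univ.filter (fun j => A s j = 1)).card : ℝ) = a s + b s := by
    intro s
    have hu : (Finset.univ : Finset (Fin n)).filter (fun j => A s j = 1)
        = R.filter (fun j => A s j = 1) ∪ Rᶜ.filter (fun j => A s j = 1) := by
      rw [← Finset.filter_union, Finset.union_compl]
    rw [hu, Finset.card_union_of_disjoint
      (Finset.disjoint_filter_filter disjoint_compl_right)]
    push_cast; rfl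
  have hsub : ∀ s, ((Finset.univ.filter (fun j : ↥(Rᶜ) => A s (j : Fin n) = 1)).card : ℝ)
      = b s := by
    intro s; rw [card_filter_subtype' Rᶜ (fun j => A s j = 1)]
  -- the candidate value is in the set, hence sInf is at most it
  set P' : ℝ := ∑ s, (nu s - (ip s) ^ 2 / wi) * b s with hP'
  have hinf_le : sInf {x : ℝ | ∃ (t' : ℕ) (U'' : Matrix (Fin m) (Fin t') ℝ)
          (V'' : Matrix (Fin t') (↥(Rᶜ)) ℝ),
        (Matrix.of (fun (s : Fin m) (j : ↥(Rᶜ)) => A s (j : Fin n))) = U'' * V'' ∧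
        (∀ s, ∑ k, (U'' s k) ^ 2 ≤ 1) ∧ (∀ j, ∑ k, (V'' k j) ^ 2 ≤ lam ^ 2) ∧
        x = ∑ s, (∑ k, (U'' s k) ^ 2) *
          ((Finset.univ.filter (fun j : ↥(Rᶜ) => A s (j : Fin n) = 1)).card : ℝ)} ≤ P' := by
    apply csInf_le
    · refine ⟨0, ?_⟩
      rintro x ⟨t', U'', V'', hf, hu, hv, rfl⟩
      exact Finset.sum_nonneg fun s _ =>
        mul_nonneg (Finset.sum_nonneg fun k _ => sq_nonneg _) (Nat.cast_nonneg _)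
    · refine ⟨t, U', V', hfac', hU'le, hV'le, ?_⟩
      rw [hP']
      exact Finset.sum_congr rfl fun s _ => by rw [hnorm' s, hsub s]
  -- translate hbig
  set F : ℝ := ∑ s, a s with hF
  have hbig' : 4 * lam ^ 2 * F ≤ ∑ s ∈ Δ, (a s + b s) := by
    have e1 : ((((Finset.univ : Finset (Fin m)) ×ˢ R).filter
        (fun p : Fin m × Fin n => A p.1 p.2 = 1)).card : ℝ) = F := by
      rw [card_filter_product' Finset.univ R (fun s j => A s j = 1)]
      push_cast
      rfl
    have e2 : (((Δ ×ˢ (Finset.univ : Finset (Fin n))).filter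
        (fun p : Fin m × Fin n => A p.1 p.2 = 1)).card : ℝ) = ∑ s ∈ Δ, (a s + b s) := by
      rw [card_filter_product' Δ Finset.univ (fun s j => A s j = 1)]
      push_cast
      exact Finset.sum_congr rfl fun s _ => hsplit s
    rw [e1, e2] at hbig
    exact hbig
  -- per-row lower bound on nu
  have hnu_row : ∀ s, a s / lam ^ 2 ≤ nu s * a s := by
    intro s
    rcases Nat.eq_zero_or_pos (R.filter (fun j => A s j = 1)).card with h | h
    · have hz : a s = 0 := Nat.cast_eq_zero.2 h
      rw [hz]; simp
    · obtain ⟨j, hj⟩ := Finset.card_pos.1 h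
      have hAsj : A s j = 1 := (Finset.mem_filter.1 hj).2
      have hcs := Finset.sum_mul_sq_le_sq_mul_sq Finset.univ (fun k => U s k) (fun k => V k j)
      have h1 : (1:ℝ) ≤ nu s * lam ^ 2 := by
        have hA1 : (∑ k, U s k * V k j) = 1 := (hA s j).symm.trans hAsj
        have hnn : 0 ≤ nu s := Finset.sum_nonneg fun k _ => sq_nonneg _
        have hVj := hV j
        simp only [hnu]
        nlinarith
      have h2 : 1 / lam ^ 2 ≤ nu s := (div_le_iff₀ hlam2pos).mpr h1
      calc a s / lam ^ 2 = (1 / lam ^ 2) * a s := by ring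
        _ ≤ nu s * a s := mul_le_mul_of_nonneg_right h2 (ha0 s)
  -- Δ rows have a large drop
  have hdelta : ∀ s ∈ Δ, 1 / (2 * lam ^ 2) ≤ (ip s) ^ 2 := by
    intro s hs
    rw [hΔ] at hs
    exact (Finset.mem_filter.1 hs).2
  have hdrop : ∀ s : Fin m, (ip s) ^ 2 ≤ (ip s) ^ 2 / wi := by
    intro s
    rw [le_div_iff₀ hwi_pos]
    nlinarith [sq_nonneg (ip s)]
  -- sum bounds
  have hsum1 : F / lam ^ 2 ≤ ∑ s, nu s * a s := by
    rw [hF, Finset.sum_div]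
    exact Finset.sum_le_sum fun s _ => hnu_row s
  have hsum2 : (1 / (2 * lam ^ 2)) * (∑ s ∈ Δ, b s) ≤ ∑ s, ((ip s) ^ 2 / wi) * b s := by
    calc (1 / (2 * lam ^ 2)) * (∑ s ∈ Δ, b s)
        = ∑ s ∈ Δ, (1 / (2 * lam ^ 2)) * b s := Finset.mul_sum _ _ _
      _ ≤ ∑ s ∈ Δ, ((ip s) ^ 2 / wi) * b s :=
          Finset.sum_le_sum fun s hs =>
            mul_le_mul_of_nonneg_right ((hdelta s hs).trans (hdrop s)) (hb0 s)
      _ ≤ ∑ s, ((ip s) ^ 2 / wi) * b s :=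
          Finset.sum_le_sum_of_subset_of_nonneg (Finset.subset_univ Δ)
            (fun s _ _ => mul_nonneg (div_nonneg (sq_nonneg _) hwi_pos.le) (hb0 s))
  have hsum3 : ∑ s ∈ Δ, a s ≤ F :=
    Finset.sum_le_sum_of_subset_of_nonneg (Finset.subset_univ Δ) (fun s _ _ => ha0 s)
  have hdb : 4 * lam ^ 2 * F - F ≤ ∑ s ∈ Δ, b s := by
    rw [Finset.sum_add_distrib] at hbig'
    linarith
  -- rewrite the potential of A
  have hPi : (∑ s, (∑ k, (U s k) ^ 2) * ((Finset.univ.filter (fun j => A s j = 1)).card : ℝ))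
      = ∑ s, nu s * (a s + b s) :=
    Finset.sum_congr rfl fun s _ => by rw [hsplit s]
  have hdiff : (∑ s, nu s * (a s + b s)) - P'
      = (∑ s, nu s * a s) + ∑ s, ((ip s) ^ 2 / wi) * b s := by
    rw [hP', ← Finset.sum_sub_distrib, ← Finset.sum_add_distrib]
    exact Finset.sum_congr rfl fun s _ => by ring
  -- rewrite the right-hand side
  have hrhs : (((Finset.univ.filter (fun p : Fin m × Fin n => A p.1 p.2 = 1)).card : ℝ) -
      (((Finset.univ ×ˢ Rᶜ).filter (fun p : Fin m × Fin n => A p.1 p.2 = 1)).card : ℝ)) = F := by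
    rw [show (Finset.univ : Finset (Fin m × Fin n))
        = (Finset.univ : Finset (Fin m)) ×ˢ (Finset.univ : Finset (Fin n)) from
        Finset.univ_product_univ.symm,
      card_filter_product' Finset.univ Finset.univ (fun s j => A s j = 1),
      card_filter_product' Finset.univ Rᶜ (fun s j => A s j = 1), Nat.cast_sum, Nat.cast_sum,
      ← Finset.sum_sub_distrib, hF]
    apply Finset.sum_congr rfl
    intro s _
    have h2 : ((Rᶜ.filter (fun j => A s j = 1)).card : ℝ) = b s := rfl
    rw [hsplit s, h2]
    ring
  -- final arithmetic
  have hF0 : 0 ≤ F := Finset.sum_nonneg fun s _ => ha0 s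
  have hfinal : 2 * F ≤ F / lam ^ 2 + (1 / (2 * lam ^ 2)) * (4 * lam ^ 2 * F - F) := by
    have key : F / lam ^ 2 + (1 / (2 * lam ^ 2)) * (4 * lam ^ 2 * F - F) - 2 * F
        = F / (2 * lam ^ 2) := by
      field_simp
      ring
    have h3 : 0 ≤ F / (2 * lam ^ 2) := div_nonneg hF0 (by positivity)
    linarith
  have hmain : F / lam ^ 2 + (1 / (2 * lam ^ 2)) * (4 * lam ^ 2 * F - F)
      ≤ (∑ s, nu s * a s) + ∑ s, ((ip s) ^ 2 / wi) * b s := by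
    have h4 : (1 / (2 * lam ^ 2)) * (4 * lam ^ 2 * F - F)
        ≤ (1 / (2 * lam ^ 2)) * ∑ s ∈ Δ, b s :=
      mul_le_mul_of_nonneg_left hdb (by positivity)
    linarith [hsum1, hsum2]
  rw [ge_iff_le, hrhs, hPi]
  linarith [hinf_le, hdiff, hfinal, hmain]
end

section
/- Assume the following structure theorem: for every boolean matrix M with γ₂(M) ≤ λ whose number of 1-entries F satisfies F > 0, there is a blocky matrix B of the same dimensions with support contained in the support of M and with at least c_λ F ones, where c_λ = 1/2^{2^{O(λ)}}. Then for every m×n boolean matrix A with γ₂(A) ≤ λ and F ones, A contains a 1-monochromatic rectangle S×T with |S| ≥ (c_λ/2)·F/n and |T| ≥ (c_λ/2)·F/m. -/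
open scoped BigOperators Matrix Classical

/-- Assuming the blocky structure theorem (every boolean matrix `M` with `γ₂(M) ≤ λ` and
at least one 1-entry contains a blocky submatrix covering a `c_λ` fraction of its ones),
every boolean matrix `A` with `γ₂(A) ≤ λ` and `F` ones contains a 1-monochromatic
rectangle `S × T` with `|S| ≥ (c_λ/2)·F/n` and `|T| ≥ (c_λ/2)·F/m`. -/
theorem blocky_implies_large_rectangle (lam c : ℝ) (hc : 0 < c)
    (H : ∀ (m n : ℕ) (M : Matrix (Fin m) (Fin n) ℝ),
      (∀ i j, M i j = 0 ∨ M i j = 1) →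
      (∃ (t : ℕ) (U : Matrix (Fin m) (Fin t) ℝ) (V : Matrix (Fin t) (Fin n) ℝ),
        M = U * V ∧ (∀ i, ∑ k, (U i k) ^ 2 ≤ 1) ∧ (∀ j, ∑ k, (V k j) ^ 2 ≤ lam ^ 2)) →
      0 < ((Finset.univ.filter (fun p : Fin m × Fin n => M p.1 p.2 = 1)).card) →
      ∃ (k : ℕ) (S : Fin k → Finset (Fin m)) (T : Fin k → Finset (Fin n)),
        (∀ a b, a ≠ b → Disjoint (S a) (S b)) ∧
        (∀ a b, a ≠ b → Disjoint (T a) (T b)) ∧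
        (∀ t i j, i ∈ S t → j ∈ T t → M i j = 1) ∧
        c * ((Finset.univ.filter (fun p : Fin m × Fin n => M p.1 p.2 = 1)).card : ℝ) ≤
          ∑ t, ((S t).card : ℝ) * ((T t).card : ℝ)) :
    ∀ (m n : ℕ) (A : Matrix (Fin m) (Fin n) ℝ),
      (∀ i j, A i j = 0 ∨ A i j = 1) →
      (∃ (t : ℕ) (U : Matrix (Fin m) (Fin t) ℝ) (V : Matrix (Fin t) (Fin n) ℝ),
        A = U * V ∧ (∀ i, ∑ k, (U i k) ^ 2 ≤ 1) ∧ (∀ j, ∑ k, (V k j) ^ 2 ≤ lam ^ 2)) →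
      ∀ F : ℝ, F = ((Finset.univ.filter (fun p : Fin m × Fin n => A p.1 p.2 = 1)).card : ℝ) →
      ∃ (S : Finset (Fin m)) (T : Finset (Fin n)),
        (∀ i ∈ S, ∀ j ∈ T, A i j = 1) ∧
        (c / 2) * F / n ≤ (S.card : ℝ) ∧ (c / 2) * F / m ≤ (T.card : ℝ) := by
  intro m n A hA hfac F hF
  by_cases hF0 : F ≤ 0
  · have hFeq : F = 0 := le_antisymm hF0 (by rw [hF]; positivity)
    exact ⟨∅, ∅, by simp, by simp [hFeq], by simp [hFeq]⟩
  push_neg at hF0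
  have hFpos : 0 < ((Finset.univ.filter
      (fun p : Fin m × Fin n => A p.1 p.2 = 1)).card) := by
    rcases Nat.eq_zero_or_pos (Finset.univ.filter
        (fun p : Fin m × Fin n => A p.1 p.2 = 1)).card with h | h
    · rw [hF, h] at hF0; norm_num at hF0
    · exact h
  obtain ⟨k, S, T, hSdisj, hTdisj, hmono, hsum⟩ := H m n A hA hfac hFpos
  -- m, n are positive since some entry exists
  obtain ⟨p, hp⟩ := Finset.card_pos.mp hFpos
  have hm : (0:ℝ) < m := by exact_mod_cast p.1.pos
  have hn : (0:ℝ) < n := by exact_mod_cast p.2.pos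
  by_contra hcon
  push_neg at hcon
  set b₁ : ℝ := (c / 2) * F / n with hb₁
  set b₂ : ℝ := (c / 2) * F / m with hb₂
  have hb₁pos : 0 < b₁ := by positivity
  have hb₂pos : 0 < b₂ := by positivity
  have hsumS : (∑ t, ((S t).card : ℝ)) ≤ m := by
    have h1 : ∑ t, (S t).card ≤ m := by
      calc ∑ t, (S t).card = (Finset.univ.biUnion S).card :=
            (Finset.card_biUnion (fun a _ b _ hab => hSdisj a b hab)).symm
        _ ≤ (Finset.univ : Finset (Fin m)).card := Finset.card_le_card (Finset.subset_univ _)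
        _ = m := Finset.card_fin m
    exact_mod_cast h1
  have hsumT : (∑ t, ((T t).card : ℝ)) ≤ n := by
    have h1 : ∑ t, (T t).card ≤ n := by
      calc ∑ t, (T t).card = (Finset.univ.biUnion T).card :=
            (Finset.card_biUnion (fun a _ b _ hab => hTdisj a b hab)).symm
        _ ≤ (Finset.univ : Finset (Fin n)).card := Finset.card_le_card (Finset.subset_univ _)
        _ = n := Finset.card_fin n
    exact_mod_cast h1
  -- get a t₀ with positive term
  have hsum' : (0:ℝ) < ∑ t, ((S t).card : ℝ) * ((T t).card : ℝ) := by
    refine lt_of_lt_of_le ?_ hsum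
    rw [← hF]; positivity
  have ⟨t₀, _, ht₀⟩ : ∃ t₀ ∈ Finset.univ, (0:ℝ) < ((S t₀).card : ℝ) * ((T t₀).card : ℝ) := by
    by_contra h
    push_neg at h
    have : (∑ t, ((S t).card : ℝ) * ((T t).card : ℝ)) ≤ 0 :=
      Finset.sum_nonpos (fun t _ => h t (Finset.mem_univ t))
    linarith
  have hST := mul_pos_iff.mp ht₀
  have hS₀ : (0:ℝ) < ((S t₀).card : ℝ) := by
    rcases hST with ⟨h1, _⟩ | ⟨h1, _⟩
    · exact h1
    · exact absurd h1 (not_lt.mpr (Nat.cast_nonneg _))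
  have hT₀ : (0:ℝ) < ((T t₀).card : ℝ) := by
    rcases hST with ⟨_, h2⟩ | ⟨_, h2⟩
    · exact h2
    · exact absurd h2 (not_lt.mpr (Nat.cast_nonneg _))
  -- pointwise bound function
  set g : Fin k → ℝ := fun t =>
    if ((S t).card : ℝ) < b₁ then b₁ * ((T t).card : ℝ) else b₂ * ((S t).card : ℝ) with hg
  have hkey : ∀ t, ¬ (((S t).card : ℝ) < b₁) → ((T t).card : ℝ) < b₂ :=
    fun t h => hcon (S t) (T t) (fun i hi j hj => hmono t i j hi hj) (not_lt.mp h)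
  have hle : ∀ t ∈ Finset.univ, ((S t).card : ℝ) * ((T t).card : ℝ) ≤ g t := by
    intro t _
    by_cases h : ((S t).card : ℝ) < b₁
    · simp only [hg, if_pos h]
      exact mul_le_mul_of_nonneg_right h.le (Nat.cast_nonneg _)
    · simp only [hg, if_neg h]
      rw [mul_comm]
      exact mul_le_mul_of_nonneg_right (hkey t h).le (Nat.cast_nonneg _)
  have hlt : ((S t₀).card : ℝ) * ((T t₀).card : ℝ) < g t₀ := by
    by_cases h : ((S t₀).card : ℝ) < b₁
    · simp only [hg, if_pos h]
      exact mul_lt_mul_of_pos_right h hT₀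
    · simp only [hg, if_neg h]
      rw [mul_comm]
      exact mul_lt_mul_of_pos_right (hkey t₀ h) hS₀
  have hstrict : (∑ t, ((S t).card : ℝ) * ((T t).card : ℝ)) < ∑ t, g t :=
    Finset.sum_lt_sum hle ⟨t₀, Finset.mem_univ t₀, hlt⟩
  have hgle : ∀ t, g t ≤ b₁ * ((T t).card : ℝ) + b₂ * ((S t).card : ℝ) := by
    intro t
    by_cases h : ((S t).card : ℝ) < b₁
    · simp only [hg, if_pos h]
      nlinarith [(Nat.cast_nonneg (S t).card : (0:ℝ) ≤ ((S t).card:ℝ)), hb₂pos]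
    · simp only [hg, if_neg h]
      nlinarith [(Nat.cast_nonneg (T t).card : (0:ℝ) ≤ ((T t).card:ℝ)), hb₁pos]
  have hgsum : (∑ t, g t) ≤ b₁ * n + b₂ * m := by
    calc (∑ t, g t) ≤ ∑ t, (b₁ * ((T t).card : ℝ) + b₂ * ((S t).card : ℝ)) :=
          Finset.sum_le_sum (fun t _ => hgle t)
      _ = b₁ * (∑ t, ((T t).card : ℝ)) + b₂ * (∑ t, ((S t).card : ℝ)) := by
          rw [Finset.sum_add_distrib, Finset.mul_sum, Finset.mul_sum]
      _ ≤ b₁ * n + b₂ * m := by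
          have := mul_le_mul_of_nonneg_left hsumT hb₁pos.le
          have := mul_le_mul_of_nonneg_left hsumS hb₂pos.le
          linarith
  have hfinal : b₁ * n + b₂ * m = c * F := by
    rw [hb₁, hb₂]
    field_simp
    ring
  have hcF : c * F ≤ ∑ t, ((S t).card : ℝ) * ((T t).card : ℝ) := by rw [hF]; exact hsum
  linarith
end
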